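/- arXiv:1603.02324 — 12 statements merged into one kernel-verified Lean document; each statement's English description precedes it below -/
import Mathlib

section
/- Let (X,d) be a metric space, let C ⊆ X be a finite set, and let h : C → ℝ be a nonnegative function. Then there exists a subset R ⊆ C such that: (i) for all distinct v, v' ∈ R one has d(v,v') > 4·max(h(v), h(v')); and (ii) for every j ∈ C there exists v ∈ R with h(v) ≤ h(j) and d(v,j) ≤ 4·h(j). -/
/-- Lemma 3.1, Properties (a) and (b): greedy choice of representatives. -/
theorem stmt_0 {X : Type*} [MetricSpace X] (C : Finset X) (h : X → ℝ)
    (hh : ∀ j ∈ C, 0 ≤ h j) :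
    ∃ R : Finset X, R ⊆ C ∧
      (∀ v ∈ R, ∀ v' ∈ R, v ≠ v' → 4 * max (h v) (h v') < dist v v') ∧
      (∀ j ∈ C, ∃ v ∈ R, h v ≤ h j ∧ dist v j ≤ 4 * h j) := by
  revert hh
  induction C using Finset.strongInduction with
  | _ C ih =>
    intro hh
    classical
    rcases C.eq_empty_or_nonempty with rfl | hne
    · exact ⟨∅, by simp⟩
    · obtain ⟨v, hv, hvmin⟩ := C.exists_min_image h hne
      have hss : C.filter (fun j => ¬ dist v j ≤ 4 * h j) ⊂ C := by
        refine Finset.filter_ssubset.mpr ⟨v, hv, ?_⟩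
        simp only [not_not, dist_self]
        linarith [hh v hv]
      obtain ⟨R', hR'sub, ha, hb⟩ := ih _ hss
        (fun j hj => hh j (Finset.filter_subset _ _ hj))
      have hR'C : R' ⊆ C := hR'sub.trans (Finset.filter_subset _ _)
      have hfar : ∀ j ∈ R', 4 * h j < dist v j := by
        intro j hj
        have := (Finset.mem_filter.mp (hR'sub hj)).2
        linarith [not_le.mp this]
      have hmin : ∀ j ∈ R', h v ≤ h j := fun j hj => hvmin j (hR'C hj)
      refine ⟨insert v R', Finset.insert_subset hv hR'C, ?_, ?_⟩
      · intro a ha' b hb' hab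
        rcases Finset.mem_insert.mp ha' with rfl | haR
        · rcases Finset.mem_insert.mp hb' with rfl | hbR
          · exact absurd rfl hab
          · rw [max_eq_right (hmin b hbR)]
            exact hfar b hbR
        · rcases Finset.mem_insert.mp hb' with rfl | hbR
          · rw [max_eq_left (hmin a haR), dist_comm]
            exact hfar a haR
          · exact ha a haR b hbR hab
      · intro j hj
        by_cases hcov : dist v j ≤ 4 * h j
        · exact ⟨v, Finset.mem_insert_self _ _, hvmin j hj, hcov⟩
        · obtain ⟨w, hw, hw1, hw2⟩ := hb j (Finset.mem_filter.mpr ⟨hj, hcov⟩)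
          exact ⟨w, Finset.mem_insert_of_mem hw, hw1, hw2⟩
end

section
/- Let (X,d) be a metric space; let F ⊆ X and C ⊆ X be finite sets; let x : F × C → ℝ be nonnegative; set d_av(j) := Σ_{i∈F} x_{i,j}·d(i,j) and D_i := Σ_{j∈C} x_{i,j}·(d(i,j) + d_av(j)). Let v ∈ X and U ⊆ F satisfy d(i,v) ≤ d(i,j) + 4·d_av(j) for all i ∈ U and j ∈ C. Then Σ_{i∈U} (Σ_{j∈C} x_{i,j})·d(i,v) ≤ 4·Σ_{i∈U} D_i. -/
/-- Lemma 3.2 (with explicit constant 4): moving the fractional demand of the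
facilities in a bundle `U` to its representative `v` costs at most `4·D_U`. -/
theorem stmt_3 {X : Type*} [MetricSpace X] (F C : Finset X) (x : X → X → ℝ)
    (hx : ∀ i ∈ F, ∀ j ∈ C, 0 ≤ x i j)
    (v : X) (U : Finset X) (hUF : U ⊆ F)
    (hd : ∀ i ∈ U, ∀ j ∈ C,
      dist i v ≤ dist i j + 4 * ∑ i' ∈ F, x i' j * dist i' j) :
    ∑ i ∈ U, (∑ j ∈ C, x i j) * dist i v ≤
      4 * ∑ i ∈ U, ∑ j ∈ C, x i j * (dist i j + ∑ i' ∈ F, x i' j * dist i' j) := by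
  rw [Finset.mul_sum]
  refine Finset.sum_le_sum fun i hi => ?_
  rw [Finset.sum_mul, Finset.mul_sum]
  refine Finset.sum_le_sum fun j hj => ?_
  have hx0 : 0 ≤ x i j := hx i (hUF hi) j hj
  have hav : 0 ≤ ∑ i' ∈ F, x i' j * dist i' j :=
    Finset.sum_nonneg fun i' hi' => mul_nonneg (hx i' hi' j hj) dist_nonneg
  calc x i j * dist i v ≤ x i j * (dist i j + 4 * ∑ i' ∈ F, x i' j * dist i' j) :=
        mul_le_mul_of_nonneg_left (hd i hi j hj) hx0
    _ ≤ 4 * (x i j * (dist i j + ∑ i' ∈ F, x i' j * dist i' j)) := by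
        have := dist_nonneg (x := i) (y := j)
        nlinarith
end

section
/- Let (X,d) be a metric space; let F ⊆ X and C ⊆ X be finite sets; let x : F × C → ℝ be nonnegative with Σ_{i∈F} x_{i,j} = 1 for every j ∈ C; set d_av(j) := Σ_{i∈F} x_{i,j}·d(i,j). Let R be a finite set, let v ↦ U_v assign to each v ∈ R ∩ X a set U_v ⊆ F such that {U_v}_{v∈R} is a partition of F (with each v ∈ R a point of X), and assume d(i,v) ≤ d(i,j) + 4·d_av(j) for every v ∈ R, i ∈ U_v and j ∈ C. Then Σ_{v∈R} Σ_{i∈U_v} (Σ_{j∈C} x_{i,j})·d(i,v) ≤ 8·Σ_{i∈F, j∈C} x_{i,j}·d(i,j). -/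
/-- Corollary 3.3 (with explicit constant 8): the total cost of the initial
moving of demands to the representatives is at most `8·LP`. -/
theorem stmt_4 {X : Type*} [MetricSpace X] (F C : Finset X) (x : X → X → ℝ)
    (hx : ∀ i ∈ F, ∀ j ∈ C, 0 ≤ x i j)
    (hsum : ∀ j ∈ C, ∑ i ∈ F, x i j = 1)
    (R : Finset X) (U : X → Finset X)
    (hUF : ∀ v ∈ R, U v ⊆ F)
    (hdisj : ∀ v ∈ R, ∀ v' ∈ R, v ≠ v' → Disjoint (U v) (U v'))
    (hcover : ∀ i ∈ F, ∃ v ∈ R, i ∈ U v)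
    (hd : ∀ v ∈ R, ∀ i ∈ U v, ∀ j ∈ C,
      dist i v ≤ dist i j + 4 * ∑ i' ∈ F, x i' j * dist i' j) :
    ∑ v ∈ R, ∑ i ∈ U v, (∑ j ∈ C, x i j) * dist i v ≤
      8 * ∑ i ∈ F, ∑ j ∈ C, x i j * dist i j := by
  classical
  set dav : X → ℝ := fun j => ∑ i' ∈ F, x i' j * dist i' j with hdav
  set LP : ℝ := ∑ i ∈ F, ∑ j ∈ C, x i j * dist i j with hLP
  have hLPnn : 0 ≤ LP := by
    apply Finset.sum_nonneg; intro i hi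
    apply Finset.sum_nonneg; intro j hj
    exact mul_nonneg (hx i hi j hj) dist_nonneg
  have hFeq : F = R.biUnion U := by
    apply Finset.ext; intro i
    constructor
    · intro hi
      obtain ⟨v, hv, hiv⟩ := hcover i hi
      exact Finset.mem_biUnion.mpr ⟨v, hv, hiv⟩
    · intro hi
      obtain ⟨v, hv, hiv⟩ := Finset.mem_biUnion.mp hi
      exact hUF v hv hiv
  -- step 1: bound each term
  have step1 : ∑ v ∈ R, ∑ i ∈ U v, (∑ j ∈ C, x i j) * dist i v ≤
      ∑ v ∈ R, ∑ i ∈ U v, ∑ j ∈ C, x i j * (dist i j + 4 * dav j) := by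
    apply Finset.sum_le_sum; intro v hv
    apply Finset.sum_le_sum; intro i hi
    rw [Finset.sum_mul]
    apply Finset.sum_le_sum; intro j hj
    exact mul_le_mul_of_nonneg_left (hd v hv i hi j hj) (hx i (hUF v hv hi) j hj)
  have step2 : ∑ v ∈ R, ∑ i ∈ U v, ∑ j ∈ C, x i j * (dist i j + 4 * dav j) =
      ∑ i ∈ F, ∑ j ∈ C, x i j * (dist i j + 4 * dav j) := by
    rw [hFeq]
    exact (Finset.sum_biUnion (fun v hv v' hv' hne => hdisj v hv v' hv' hne)).symm
  have step3 : ∑ i ∈ F, ∑ j ∈ C, x i j * (dist i j + 4 * dav j) = LP + 4 * LP := by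
    have : ∑ i ∈ F, ∑ j ∈ C, x i j * (dist i j + 4 * dav j) =
        (∑ i ∈ F, ∑ j ∈ C, x i j * dist i j) +
        ∑ i ∈ F, ∑ j ∈ C, x i j * (4 * dav j) := by
      rw [← Finset.sum_add_distrib]
      congr 1; ext i
      rw [← Finset.sum_add_distrib]
      congr 1; ext j
      ring
    rw [this]
    congr 1
    rw [Finset.sum_comm]
    have : ∀ j ∈ C, ∑ i ∈ F, x i j * (4 * dav j) = 4 * dav j := by
      intro j hj
      rw [← Finset.sum_mul, hsum j hj, one_mul]
    rw [Finset.sum_congr rfl this, ← Finset.mul_sum]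
    congr 1
    rw [hLP, Finset.sum_comm]
  calc ∑ v ∈ R, ∑ i ∈ U v, (∑ j ∈ C, x i j) * dist i v
      ≤ LP + 4 * LP := by rw [← step3, ← step2]; exact step1
    _ ≤ 8 * LP := by nlinarith
end

section
/- Let (R,d) be a finite metric space, let ℓ ≥ 1 be a real number, and let w : R → ℝ satisfy w(v) ≥ 1/2 for every v ∈ R and Σ_{v∈R} w(v) ≥ ℓ. Then there exist a partition 𝒥 of R into nonempty sets, a map par : 𝒥 → Option 𝒥, and a rank function rk : 𝒥 → ℕ with the property that par(J) = some J' implies rk(J') < rk(J) (so par defines a rooted forest on 𝒥), such that, writing w(J) := Σ_{v∈J} w(v) and, for J ≠ R, L(J) := min{d(v,v') : v ∈ J, v' ∈ R∖J}, the following hold: (a) for every J ∈ 𝒥 with J ≠ R, the graph on vertex set J with an edge between v and v' whenever d(v,v') ≤ L(J) is connected; (b) par(J) = none if and only if w(J) ≥ ℓ; (c) if par(J) = none then w(J) < 2ℓ or |J| = 1; (d) if par(J) = some J' then L(J) ≥ L(J'); (e) if par(J) = some J' then min{d(v,v') : v ∈ J, v' ∈ J'} ≤ 5ℓ·L(J);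 (f) for every J' ∈ 𝒥, at most two J ∈ 𝒥 satisfy par(J) = some J'. -/
/-!
Run Kruskal's algorithm on `(R, d)`, always merging the two parts joined by a shortest crossing
edge `uu'`, of length `δ`; so `δ` never decreases. A part is light while its weight is `< ℓ`.
When two light parts merge into a heavy one, the union becomes a root component; when a light part
`A ∋ u` merges into a heavy part, `A` becomes a component hung below the component `J' ∋ u'`, or
rather below the end of the chain of components already hung below `J'`, so that no component gets
more than two children. Light parts have diameter at most `(2 w(A) - 1) δ`, components at most
`(4ℓ - 1) δ`, and a part has gap at least `δ` to the rest when it is frozen into a component.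
This gives (a) and (d), and (e) through the path `u → u' → J' → end of chain`, of length at most
`δ + (4ℓ - 1) δ + δ ≤ 5ℓ δ`.
-/

open Finset Function Relation

namespace BlackComponents

variable {R : Type*}

section Metric

variable [PseudoMetricSpace R]

/-- The paper's `L(J)`; for `J = univ` the infimum is over the empty set, hence `0`. -/
noncomputable def gap (J : Finset R) : ℝ :=
  sInf {r : ℝ | ∃ v ∈ J, ∃ v', v' ∉ J ∧ r = dist v v'}

noncomputable def minDist (J J' : Finset R) : ℝ :=
  sInf {r : ℝ | ∃ v ∈ J, ∃ v' ∈ J', r = dist v v'}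

def ChainConnected (c : ℝ) (J : Finset R) : Prop :=
  ∀ a ∈ J, ∀ b ∈ J, ReflTransGen (fun x y => x ∈ J ∧ y ∈ J ∧ dist x y ≤ c) a b

lemma gap_le {J : Finset R} {v v' : R} (hv : v ∈ J) (hv' : v' ∉ J) : gap J ≤ dist v v' :=
  csInf_le ⟨0, by rintro r ⟨a, -, b, -, rfl⟩; exact dist_nonneg⟩ ⟨v, hv, v', hv', rfl⟩

lemma le_gap {J : Finset R} {c : ℝ} {v v' : R} (hv : v ∈ J) (hv' : v' ∉ J)
    (h : ∀ a ∈ J, ∀ b ∉ J, c ≤ dist a b) : c ≤ gap J :=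
  le_csInf ⟨_, v, hv, v', hv', rfl⟩ (by rintro r ⟨a, ha, b, hb, rfl⟩; exact h a ha b hb)

lemma minDist_le {J J' : Finset R} {v v' : R} (hv : v ∈ J) (hv' : v' ∈ J') :
    minDist J J' ≤ dist v v' :=
  csInf_le ⟨0, by rintro r ⟨a, -, b, -, rfl⟩; exact dist_nonneg⟩ ⟨v, hv, v', hv', rfl⟩

lemma ChainConnected.mono {c c' : ℝ} {J : Finset R} (h : ChainConnected c J) (hc : c ≤ c') :
    ChainConnected c' J := fun a ha b hb =>
  ReflTransGen.mono (fun _ _ hxy => ⟨hxy.1, hxy.2.1, hxy.2.2.trans hc⟩) a b (h a ha b hb)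

lemma chainConnected_singleton (c : ℝ) (x : R) : ChainConnected c {x} := by
  intro a ha b hb
  rw [mem_singleton] at ha hb
  rw [ha, hb]

lemma ChainConnected.union [DecidableEq R] {c : ℝ} {A B : Finset R} {u u' : R}
    (hA : ChainConnected c A) (hB : ChainConnected c B) (hu : u ∈ A) (hu' : u' ∈ B)
    (huu' : dist u u' ≤ c) : ChainConnected c (A ∪ B) := by
  have lift : ∀ {S : Finset R}, S ⊆ A ∪ B → ChainConnected c S → ∀ a ∈ S, ∀ b ∈ S,
      ReflTransGen (fun x y => x ∈ A ∪ B ∧ y ∈ A ∪ B ∧ dist x y ≤ c) a b :=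
    fun hS h a ha b hb =>
      ReflTransGen.mono (fun _ _ hxy => ⟨hS hxy.1, hS hxy.2.1, hxy.2.2⟩) a b (h a ha b hb)
  have hA' := lift subset_union_left hA
  have hB' := lift subset_union_right hB
  have edge : ReflTransGen (fun x y => x ∈ A ∪ B ∧ y ∈ A ∪ B ∧ dist x y ≤ c) u u' :=
    .single ⟨mem_union_left _ hu, mem_union_right _ hu', huu'⟩
  have edge' : ReflTransGen (fun x y => x ∈ A ∪ B ∧ y ∈ A ∪ B ∧ dist x y ≤ c) u' u :=
    .single ⟨mem_union_right _ hu', mem_union_left _ hu, by rwa [dist_comm]⟩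
  intro a ha b hb
  rcases mem_union.mp ha with ha | ha <;> rcases mem_union.mp hb with hb | hb
  · exact hA' a ha b hb
  · exact (hA' a ha u hu).trans (edge.trans (hB' u' hu' b hb))
  · exact (hB' a ha u' hu').trans (edge'.trans (hA' u hu b hb))
  · exact hB' a ha b hb

lemma dist_le_of_mem_union [DecidableEq R] {A B : Finset R} {dA dB : ℝ} {u u' : R}
    (hA : ∀ a ∈ A, ∀ b ∈ A, dist a b ≤ dA) (hB : ∀ a ∈ B, ∀ b ∈ B, dist a b ≤ dB)
    (hu : u ∈ A) (hu' : u' ∈ B) :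
    ∀ a ∈ A ∪ B, ∀ b ∈ A ∪ B, dist a b ≤ dA + dist u u' + dB := by
  have hdA : 0 ≤ dA := dist_nonneg.trans (hA u hu u hu)
  have hdB : 0 ≤ dB := dist_nonneg.trans (hB u' hu' u' hu')
  have huu' : 0 ≤ dist u u' := dist_nonneg
  intro a ha b hb
  rcases mem_union.mp ha with ha | ha <;> rcases mem_union.mp hb with hb | hb
  · linarith [hA a ha b hb]
  · linarith [dist_triangle4 a u u' b, hA a ha u hu, hB u' hu' b hb]
  · linarith [dist_triangle4 a u' u b, hB a ha u' hu', hA u hu b hb, dist_comm u' u]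
  · linarith [hB a ha b hb]

end Metric

lemma half_le_sum {w : R → ℝ} (hw : ∀ v, 1 / 2 ≤ w v) {S : Finset R} {x : R} (hx : x ∈ S) :
    1 / 2 ≤ ∑ v ∈ S, w v :=
  (hw x).trans (single_le_sum (fun v _ => by linarith [hw v]) hx)

lemma sum_mono_of_half_le {w : R → ℝ} (hw : ∀ v, 1 / 2 ≤ w v) {S T : Finset R} (h : S ⊆ T) :
    ∑ v ∈ S, w v ≤ ∑ v ∈ T, w v :=
  sum_le_sum_of_subset_of_nonneg h fun v _ _ => by linarith [hw v]

structure IsBlockMap (cls : R → Finset R) : Prop where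
  mem_self : ∀ x, x ∈ cls x
  eq_of_mem : ∀ {x y}, y ∈ cls x → cls y = cls x

section BlockMap

variable {cls : R → Finset R}

lemma IsBlockMap.mem_of_mem (h : IsBlockMap cls) {x y z : R} (hyx : y ∈ cls x) (hyz : y ∈ cls z) :
    x ∈ cls z :=
  (h.eq_of_mem hyx).symm.trans (h.eq_of_mem hyz) ▸ h.mem_self x

lemma IsBlockMap.not_mem_symm (h : IsBlockMap cls) {x y : R} (hxy : y ∉ cls x) : x ∉ cls y :=
  fun hx => hxy (h.mem_of_mem hx (h.mem_self x))

lemma IsBlockMap.disjoint (h : IsBlockMap cls) {x y : R} (hxy : y ∉ cls x) :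
    Disjoint (cls x) (cls y) :=
  disjoint_left.mpr fun _ hzx hzy => hxy (h.mem_of_mem hzy hzx)

variable [DecidableEq R]

def mergeCls (cls : R → Finset R) (u u' x : R) : Finset R :=
  if x ∈ cls u ∪ cls u' then cls u ∪ cls u' else cls x

lemma mergeCls_of_mem {u u' x : R} (hx : x ∈ cls u ∪ cls u') :
    mergeCls cls u u' x = cls u ∪ cls u' :=
  if_pos hx

lemma mergeCls_of_not_mem {u u' x : R} (hx : x ∉ cls u ∪ cls u') :
    mergeCls cls u u' x = cls x :=
  if_neg hx

lemma IsBlockMap.eq_or_eq_of_mem_union (h : IsBlockMap cls) {u u' x : R}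
    (hx : x ∈ cls u ∪ cls u') : cls x = cls u ∨ cls x = cls u' :=
  (mem_union.mp hx).imp h.eq_of_mem h.eq_of_mem

lemma IsBlockMap.subset_mergeCls (h : IsBlockMap cls) (u u' x : R) :
    cls x ⊆ mergeCls cls u u' x := by
  by_cases hx : x ∈ cls u ∪ cls u'
  · rw [mergeCls_of_mem hx]
    rcases h.eq_or_eq_of_mem_union hx with hx | hx <;> rw [hx]
    exacts [subset_union_left, subset_union_right]
  · rw [mergeCls_of_not_mem hx]

lemma IsBlockMap.mergeCls (h : IsBlockMap cls) (u u' : R) : IsBlockMap (mergeCls cls u u') where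
  mem_self x := h.subset_mergeCls u u' x (h.mem_self x)
  eq_of_mem {x y} hy := by
    by_cases hx : x ∈ cls u ∪ cls u'
    · rw [mergeCls_of_mem hx] at hy ⊢
      exact mergeCls_of_mem hy
    · rw [mergeCls_of_not_mem hx] at hy ⊢
      have hy' : y ∉ cls u ∪ cls u' := fun hy' =>
        hx (mem_union.mpr ((mem_union.mp hy').imp (h.mem_of_mem hy) (h.mem_of_mem hy)))
      rw [mergeCls_of_not_mem hy', h.eq_of_mem hy]

variable [Fintype R]

def sepCount (cls : R → Finset R) : ℕ :=
  #(univ.filter fun p : R × R => p.2 ∉ cls p.1)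

lemma sepCount_lt_of_subset {cls' : R → Finset R} (hsub : ∀ x, cls x ⊆ cls' x) {u u' : R}
    (hu : u' ∉ cls u) (hu' : u' ∈ cls' u) : sepCount cls' < sepCount cls := by
  refine card_lt_card ((ssubset_iff_of_subset fun p => ?_).mpr ⟨(u, u'), ?_, ?_⟩)
  · simp only [mem_filter, mem_univ, true_and]
    exact fun hp h => hp (hsub _ h)
  · simpa using hu
  · simpa using hu'

end BlockMap

section Kruskal

variable [PseudoMetricSpace R] {cls : R → Finset R} {ℓ δ : ℝ} {w : R → ℝ} {u u' : R}

def IsMinCrossPair (cls : R → Finset R) (u u' : R) : Prop :=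
  u' ∉ cls u ∧ ∀ x y, y ∉ cls x → dist u u' ≤ dist x y

lemma IsMinCrossPair.symm (hcls : IsBlockMap cls) (h : IsMinCrossPair cls u u') :
    IsMinCrossPair cls u' u :=
  ⟨hcls.not_mem_symm h.1, fun x y hxy => dist_comm u u' ▸ h.2 x y hxy⟩

lemma IsBlockMap.le_gap (hcls : IsBlockMap cls) (hδ : ∀ x y, y ∉ cls x → δ ≤ dist x y)
    {x y : R} (hy : y ∉ cls x) : δ ≤ gap (cls x) :=
  BlackComponents.le_gap (hcls.mem_self x) hy fun a ha b hb => hδ a b (by rwa [hcls.eq_of_mem ha])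

lemma exists_isMinCrossPair [Fintype R] [DecidableEq R] (h : ∃ x y, y ∉ cls x) :
    ∃ u u', IsMinCrossPair cls u u' := by
  obtain ⟨x, y, hxy⟩ := h
  obtain ⟨⟨u, u'⟩, hp, hmin⟩ := (univ.filter fun p : R × R => p.2 ∉ cls p.1).exists_min_image
    (fun p => dist p.1 p.2) ⟨(x, y), by simpa using hxy⟩
  exact ⟨u, u', (mem_filter.mp hp).2, fun a b hab => hmin (a, b) (by simpa using hab)⟩

/-- `cls x` is the part of `x` in Kruskal's algorithm and `δ` the length of the last merged edge. -/
structure PartInv (ℓ : ℝ) (w : R → ℝ) (cls : R → Finset R) (δ : ℝ) : Prop where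
  isBlockMap : IsBlockMap cls
  le_dist : ∀ x y, y ∉ cls x → δ ≤ dist x y
  chainConnected : ∀ x, ChainConnected δ (cls x)
  dist_le_of_light : ∀ x, ∑ v ∈ cls x, w v < ℓ →
    ∀ a ∈ cls x, ∀ b ∈ cls x, dist a b ≤ (2 * ∑ v ∈ cls x, w v - 1) * δ

variable [DecidableEq R]

lemma PartInv.dist_le_of_light_union (h : PartInv ℓ w cls δ) (hw : ∀ v, 1 / 2 ≤ w v)
    (hm : IsMinCrossPair cls u u') (hA : ∑ v ∈ cls u, w v < ℓ) (hB : ∑ v ∈ cls u', w v < ℓ) :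
    ∀ a ∈ cls u ∪ cls u', ∀ b ∈ cls u ∪ cls u',
      dist a b ≤ (2 * ∑ v ∈ cls u ∪ cls u', w v - 1) * dist u u' := by
  have hδ : δ ≤ dist u u' := h.le_dist u u' hm.1
  have hwA := half_le_sum hw (h.isBlockMap.mem_self u)
  have hwB := half_le_sum hw (h.isBlockMap.mem_self u')
  intro a ha b hb
  refine (dist_le_of_mem_union (h.dist_le_of_light u hA) (h.dist_le_of_light u' hB)
    (h.isBlockMap.mem_self u) (h.isBlockMap.mem_self u') a ha b hb).trans ?_
  rw [sum_union (h.isBlockMap.disjoint hm.1)]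
  nlinarith

lemma PartInv.merge (h : PartInv ℓ w cls δ) (hw : ∀ v, 1 / 2 ≤ w v)
    (hm : IsMinCrossPair cls u u') : PartInv ℓ w (mergeCls cls u u') (dist u u') := by
  have hcls := h.isBlockMap
  have hδ : δ ≤ dist u u' := h.le_dist u u' hm.1
  refine ⟨hcls.mergeCls u u',
    fun x y hxy => hm.2 x y fun hy => hxy (hcls.subset_mergeCls u u' x hy), fun x => ?_, fun x hx => ?_⟩
  · by_cases hxm : x ∈ cls u ∪ cls u'
    · rw [mergeCls_of_mem hxm]
      exact ((h.chainConnected u).mono hδ).union ((h.chainConnected u').mono hδ)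
        (hcls.mem_self u) (hcls.mem_self u') le_rfl
    · rw [mergeCls_of_not_mem hxm]
      exact (h.chainConnected x).mono hδ
  · by_cases hxm : x ∈ cls u ∪ cls u'
    · rw [mergeCls_of_mem hxm] at hx ⊢
      exact h.dist_le_of_light_union hw hm
        ((sum_mono_of_half_le hw subset_union_left).trans_lt hx)
        ((sum_mono_of_half_le hw subset_union_right).trans_lt hx)
    · rw [mergeCls_of_not_mem hxm] at hx ⊢
      intro a ha b hb
      have := half_le_sum hw (hcls.mem_self x)
      exact (h.dist_le_of_light x hx a ha b hb).trans
        (mul_le_mul_of_nonneg_left hδ (by linarith))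

end Kruskal

/-- Components absorbed into the same component `K` are chained (left-child-right-sibling):
the first becomes a child of `K`, each later one a child of the previous one, and `att K` is the
current end of that chain.
`rk J` is the time at which `J` was created and `clock` the current time. -/
structure Forest (R : Type*) where
  comps : Finset (Finset R)
  par : Finset R → Option (Finset R)
  att : Finset R → Finset R
  rk : Finset R → ℕ
  clock : ℕ

namespace Forest

variable [DecidableEq R] (f : Forest R)

/-- The children of `K` plus the children it may still receive, one per chain ending at `K`. -/
def load (K : Finset R) : ℕ :=
  #(f.comps.filter (f.par · = some K)) + #(f.comps.filter (f.att · = K))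

def addComp (J : Finset R) (p : Option (Finset R)) (K : Finset R) : Forest R where
  comps := insert J f.comps
  par := update f.par J p
  att L := if L = K ∨ L = J then J else f.att L
  rk := update f.rk J f.clock
  clock := f.clock + 1

noncomputable def init [Fintype R] (ℓ : ℝ) (w : R → ℝ) : Forest R where
  comps := (univ.filter (ℓ ≤ w ·)).image singleton
  par _ := none
  att := id
  rk _ := 0
  clock := 1

variable {f} {J K K' : Finset R} {p : Option (Finset R)}

lemma load_addComp_le (hJ : J ∉ f.comps) (hK' : K' ∈ f.comps)
    (hp : ∀ T, p = some T → K ∈ f.comps ∧ T = f.att K) :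
    (f.addComp J p K).load K' ≤ f.load K' := by
  set g := f.addComp J p K
  have hK'J : K' ≠ J := ne_of_mem_of_not_mem hK' hJ
  have hne : ∀ L ∈ f.comps, L ≠ J := fun L hL => ne_of_mem_of_not_mem hL hJ
  have hpar : g.comps.filter (g.par · = some K') ⊆
      insert J (f.comps.filter (f.par · = some K')) := by
    intro L hL
    simp only [g, Forest.addComp, mem_filter, mem_insert] at hL ⊢
    rcases hL with ⟨rfl | hL, hLK⟩
    · exact Or.inl rfl
    · exact Or.inr ⟨hL, by rwa [update_of_ne (hne L hL)] at hLK⟩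
  have hatt : g.comps.filter (g.att · = K') ⊆ (f.comps.filter (f.att · = K')).erase K := by
    intro L hL
    simp only [g, Forest.addComp, mem_filter, mem_insert, mem_erase] at hL ⊢
    obtain ⟨hL, hLK⟩ := hL
    split_ifs at hLK with hKJ
    · exact absurd hLK.symm hK'J
    · push Not at hKJ
      exact ⟨hKJ.1, hL.resolve_left hKJ.2, hLK⟩
  have h1 := card_le_card hpar
  have h2 := card_le_card hatt
  have h3 := card_insert_le J (f.comps.filter (f.par · = some K'))
  rw [load, load]
  by_cases hpK : p = some K'
  · obtain ⟨hK, hKatt⟩ := hp K' hpK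
    have hmem : K ∈ f.comps.filter (f.att · = K') := mem_filter.mpr ⟨hK, hKatt.symm⟩
    have h4 := card_erase_add_one hmem
    omega
  · have hpar' : g.comps.filter (g.par · = some K') ⊆ f.comps.filter (f.par · = some K') := by
      intro L hL
      rcases mem_insert.mp (hpar hL) with rfl | hL'
      · simp only [g, Forest.addComp, mem_filter, update_self] at hL
        exact absurd hL.2 hpK
      · exact hL'
    have h4 := card_le_card hpar'
    have h5 := card_erase_le (s := f.comps.filter (f.att · = K')) (a := K)
    omega

end Forest

section Valid

variable [PseudoMetricSpace R] [Fintype R]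

/-- Properties (a)–(e) for a component `J` with parent `p`. -/
structure IsBlackComp (ℓ : ℝ) (w : R → ℝ) (J : Finset R) (p : Option (Finset R)) : Prop where
  nonempty : J.Nonempty
  chainConnected : J ≠ univ → ChainConnected (gap J) J
  eq_none_iff : p = none ↔ ℓ ≤ ∑ v ∈ J, w v
  sum_lt_or_card_eq_one : p = none → ∑ v ∈ J, w v < 2 * ℓ ∨ #J = 1
  gap_le : ∀ J', p = some J' → gap J' ≤ gap J
  minDist_le : ∀ J', p = some J' → minDist J J' ≤ 5 * ℓ * gap J

variable [DecidableEq R] {ℓ : ℝ} {w : R → ℝ} {f : Forest R} {J K : Finset R}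
  {p : Option (Finset R)}

structure Forest.Valid (ℓ : ℝ) (w : R → ℝ) (f : Forest R) : Prop where
  isBlackComp : ∀ J ∈ f.comps, IsBlackComp ℓ w J (f.par J)
  disjoint : ∀ J ∈ f.comps, ∀ J' ∈ f.comps, J ≠ J' → Disjoint J J'
  par_mem : ∀ J ∈ f.comps, ∀ J', f.par J = some J' → J' ∈ f.comps ∧ f.rk J' < f.rk J
  rk_lt : ∀ J ∈ f.comps, f.rk J < f.clock
  att_mem : ∀ J ∈ f.comps, f.att J ∈ f.comps
  load_le : ∀ K ∈ f.comps, f.load K ≤ 2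

lemma Forest.Valid.load_addComp_self_le (hf : f.Valid ℓ w) (hJ : J ∉ f.comps)
    (hp : ∀ T, p = some T → T ∈ f.comps) : (f.addComp J p K).load J ≤ 2 := by
  set g := f.addComp J p K
  have hpar : g.comps.filter (g.par · = some J) = ∅ := by
    refine filter_eq_empty_iff.mpr fun L hL hLJ => ?_
    rcases mem_insert.mp hL with rfl | hL
    · exact hJ (hp _ (by simpa [g, Forest.addComp] using hLJ))
    · have : f.par L = some J := by
        simpa [g, Forest.addComp, update_of_ne (ne_of_mem_of_not_mem hL hJ)] using hLJ
      exact hJ (hf.par_mem L hL J this).1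
  have hatt : g.comps.filter (g.att · = J) ⊆ {K, J} := by
    intro L hL
    simp only [g, Forest.addComp, mem_filter, mem_insert] at hL
    obtain ⟨hL, hLJ⟩ := hL
    split_ifs at hLJ with hKJ
    · simpa using hKJ
    · rcases hL with rfl | hL
      · simp
      · exact absurd (hLJ ▸ hf.att_mem L hL) hJ
  rw [Forest.load, hpar, card_empty, zero_add]
  exact (card_le_card hatt).trans card_le_two

lemma Forest.Valid.addComp (hf : f.Valid ℓ w) (hJ : IsBlackComp ℓ w J p)
    (hdisj : ∀ L ∈ f.comps, Disjoint L J)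
    (hp : ∀ T, p = some T → K ∈ f.comps ∧ T = f.att K) : (f.addComp J p K).Valid ℓ w := by
  have hJF : J ∉ f.comps := fun hJF =>
    hJ.nonempty.ne_empty ((disjoint_self_iff_empty J).mp (hdisj J hJF))
  have hne : ∀ L ∈ f.comps, L ≠ J := fun L hL => ne_of_mem_of_not_mem hL hJF
  refine ⟨fun L hL => ?_, fun L hL L' hL' hLL' => ?_, fun L hL T hT => ?_, fun L hL => ?_,
    fun L hL => ?_, fun L hL => ?_⟩
  · rcases mem_insert.mp hL with rfl | hL
    · simpa [Forest.addComp] using hJ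
    · simpa [Forest.addComp, update_of_ne (hne L hL)] using hf.isBlackComp L hL
  · rcases mem_insert.mp hL with hLJ | hL <;> rcases mem_insert.mp hL' with hL'J | hL'
    · exact absurd (hLJ.trans hL'J.symm) hLL'
    · exact hLJ ▸ (hdisj L' hL').symm
    · exact hL'J ▸ hdisj L hL
    · exact hf.disjoint L hL L' hL' hLL'
  · rcases mem_insert.mp hL with rfl | hL
    · simp only [Forest.addComp, update_self] at hT
      obtain ⟨hK, rfl⟩ := hp T hT
      have hT := hf.att_mem K hK
      refine ⟨mem_insert_of_mem hT, ?_⟩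
      simp [Forest.addComp, update_of_ne (hne _ hT), hf.rk_lt _ hT]
    · simp only [Forest.addComp, update_of_ne (hne L hL)] at hT ⊢
      obtain ⟨hTF, hlt⟩ := hf.par_mem L hL T hT
      exact ⟨mem_insert_of_mem hTF, by rwa [update_of_ne (hne T hTF)]⟩
  · rcases mem_insert.mp hL with rfl | hL
    · simp [Forest.addComp]
    · simp only [Forest.addComp, update_of_ne (hne L hL)]
      exact (hf.rk_lt L hL).trans (Nat.lt_succ_self _)
  · simp only [Forest.addComp]
    split_ifs with hLKJ
    · exact mem_insert_self J _
    · push Not at hLKJ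
      exact mem_insert_of_mem (hf.att_mem L ((mem_insert.mp hL).resolve_left hLKJ.2))
  · rcases mem_insert.mp hL with rfl | hL
    · exact hf.load_addComp_self_le hJF fun T hT => (hp T hT).2 ▸ hf.att_mem _ (hp T hT).1
    · exact (Forest.load_addComp_le hJF hL hp).trans (hf.load_le L hL)

end Valid

section Calibrated

variable [PseudoMetricSpace R] {ℓ δ : ℝ} {f : Forest R}

structure Forest.Calibrated (ℓ δ : ℝ) (f : Forest R) : Prop where
  dist_le : ∀ J ∈ f.comps, ∀ a ∈ J, ∀ b ∈ J, dist a b ≤ (4 * ℓ - 1) * δ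
  exists_dist_att_le : ∀ J ∈ f.comps, ∃ a ∈ J, ∃ b ∈ f.att J, dist a b ≤ δ
  gap_att_le : ∀ J ∈ f.comps, f.att J ≠ J → gap (f.att J) ≤ δ

lemma Forest.Calibrated.mono (h : f.Calibrated ℓ δ) (hℓ : 1 / 4 ≤ ℓ) {δ' : ℝ} (hδ : δ ≤ δ') :
    f.Calibrated ℓ δ' where
  dist_le J hJ a ha b hb :=
    (h.dist_le J hJ a ha b hb).trans (mul_le_mul_of_nonneg_left hδ (by linarith))
  exists_dist_att_le J hJ :=
    let ⟨a, ha, b, hb, hab⟩ := h.exists_dist_att_le J hJ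
    ⟨a, ha, b, hb, hab.trans hδ⟩
  gap_att_le J hJ hne := (h.gap_att_le J hJ hne).trans hδ

variable [DecidableEq R] {J K : Finset R} {p : Option (Finset R)}

lemma Forest.Calibrated.addComp (h : f.Calibrated ℓ δ)
    (hdiam : ∀ a ∈ J, ∀ b ∈ J, dist a b ≤ (4 * ℓ - 1) * δ)
    (hnear : ∃ a ∈ K, ∃ b ∈ J, dist a b ≤ δ) (hgap : K ≠ J → gap J ≤ δ) :
    (f.addComp J p K).Calibrated ℓ δ := by
  obtain ⟨a, ha, b, hb, hab⟩ := hnear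
  refine ⟨fun L hL => ?_, fun L hL => ?_, fun L hL => ?_⟩ <;>
    simp only [Forest.addComp, mem_insert] at hL ⊢
  · rcases hL with rfl | hL
    exacts [hdiam, h.dist_le L hL]
  · split_ifs with hLKJ
    · rcases hLKJ with rfl | rfl
      exacts [⟨a, ha, b, hb, hab⟩, ⟨b, hb, b, hb, by simpa using dist_nonneg.trans hab⟩]
    · push Not at hLKJ
      exact h.exists_dist_att_le L (hL.resolve_left hLKJ.2)
  · split_ifs with hLKJ
    · rintro hJL
      exact hgap (hLKJ.resolve_right (Ne.symm hJL) ▸ hJL.symm)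
    · push Not at hLKJ
      exact h.gap_att_le L (hL.resolve_left hLKJ.2)

end Calibrated

section Covers

variable {ℓ : ℝ} {w : R → ℝ} {cls : R → Finset R}

def Covers (ℓ : ℝ) (w : R → ℝ) (cls : R → Finset R) (F : Finset (Finset R)) : Prop :=
  ∀ x, (∃ J ∈ F, x ∈ J) ↔ ℓ ≤ ∑ v ∈ cls x, w v

lemma Covers.disjoint {F : Finset (Finset R)} (h : Covers ℓ w cls F) {J S : Finset R}
    (hJ : J ∈ F) (hS : ∀ x ∈ S, ∑ v ∈ cls x, w v < ℓ) : Disjoint J S :=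
  disjoint_left.mpr fun x hxJ hxS => (hS x hxS).not_ge ((h x).mp ⟨J, hJ, hxJ⟩)

variable [DecidableEq R] {u u' : R}

lemma Covers.mergeCls {F F' : Finset (Finset R)} (h : Covers ℓ w cls F)
    (hout : ∀ x ∉ cls u ∪ cls u', (∃ J ∈ F', x ∈ J) ↔ ∃ J ∈ F, x ∈ J)
    (hin : ∀ x ∈ cls u ∪ cls u', (∃ J ∈ F', x ∈ J) ↔ ℓ ≤ ∑ v ∈ cls u ∪ cls u', w v) :
    Covers ℓ w (mergeCls cls u u') F' := by
  intro x
  by_cases hx : x ∈ cls u ∪ cls u'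
  · rw [mergeCls_of_mem hx]
    exact hin x hx
  · rw [mergeCls_of_not_mem hx]
    exact (hout x hx).trans (h x)

end Covers

section Invariant

variable [PseudoMetricSpace R] [Fintype R] [DecidableEq R] {ℓ δ : ℝ} {w : R → ℝ}
  {cls : R → Finset R} {f : Forest R} {u u' : R}

structure Invariant (ℓ : ℝ) (w : R → ℝ) (cls : R → Finset R) (δ : ℝ) (f : Forest R) :
    Prop where
  part : PartInv ℓ w cls δ
  valid : f.Valid ℓ w
  calibrated : f.Calibrated ℓ δ
  covers : Covers ℓ w cls f.comps

lemma Invariant.init (ℓ : ℝ) (w : R → ℝ) :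
    Invariant ℓ w (fun x => {x}) 0 (Forest.init ℓ w) := by
  unfold Forest.init
  refine ⟨⟨⟨mem_singleton_self, fun h => by rw [mem_singleton.mp h]⟩,
    fun _ _ _ => dist_nonneg, fun x => chainConnected_singleton 0 x, ?_⟩,
    ⟨?_, ?_, by simp, by simp, fun J hJ => hJ, ?_⟩, ⟨?_, ?_, by simp⟩, ?_⟩
  · intro x _ a ha b hb
    simp_all
  · simp only [mem_image, mem_filter, mem_univ, true_and]
    rintro _ ⟨v, hv, rfl⟩
    exact ⟨singleton_nonempty v, fun _ => chainConnected_singleton _ v, by simpa using hv,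
      by simp, by simp, by simp⟩
  · simp only [mem_image]
    rintro _ ⟨v, -, rfl⟩ _ ⟨v', -, rfl⟩ hvv'
    exact disjoint_singleton.mpr fun h => hvv' (h ▸ rfl)
  · intro K hK
    simp [Forest.load, filter_eq', hK]
  · simp only [mem_image]
    rintro _ ⟨v, -, rfl⟩ a ha b hb
    simp_all
  · simp only [mem_image]
    rintro _ ⟨v, -, rfl⟩
    exact ⟨v, mem_singleton_self v, v, mem_singleton_self v, by simp⟩
  · intro x
    simp

lemma Invariant.merge (h : Invariant ℓ w cls δ f) (hw : ∀ v, 1 / 2 ≤ w v) (hℓ : 1 ≤ ℓ)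
    (hm : IsMinCrossPair cls u u')
    (hheavy : ∀ x ∈ cls u ∪ cls u', ℓ ≤ ∑ v ∈ cls x, w v ↔ ℓ ≤ ∑ v ∈ cls u ∪ cls u', w v) :
    Invariant ℓ w (mergeCls cls u u') (dist u u') f where
  part := h.part.merge hw hm
  valid := h.valid
  calibrated := h.calibrated.mono (by linarith) (h.part.le_dist u u' hm.1)
  covers := h.covers.mergeCls (fun _ _ => Iff.rfl) fun x hx => (h.covers x).trans (hheavy x hx)

lemma Invariant.mergeRoot (h : Invariant ℓ w cls δ f) (hw : ∀ v, 1 / 2 ≤ w v) (hℓ : 1 ≤ ℓ)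
    (hm : IsMinCrossPair cls u u') (hA : ∑ v ∈ cls u, w v < ℓ) (hB : ∑ v ∈ cls u', w v < ℓ)
    (hAB : ℓ ≤ ∑ v ∈ cls u ∪ cls u', w v) :
    Invariant ℓ w (mergeCls cls u u') (dist u u')
      (f.addComp (cls u ∪ cls u') none (cls u ∪ cls u')) := by
  have hcls := h.part.isBlockMap
  have hpart := h.part.merge hw hm
  have huJ : u ∈ cls u ∪ cls u' := mem_union_left _ (hcls.mem_self u)
  have hclsu : mergeCls cls u u' u = cls u ∪ cls u' := mergeCls_of_mem huJ
  have hlight : ∀ x ∈ cls u ∪ cls u', ∑ v ∈ cls x, w v < ℓ := fun x hx => by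
    rcases hcls.eq_or_eq_of_mem_union hx with hx | hx <;> rwa [hx]
  have hsum : ∑ v ∈ cls u ∪ cls u', w v < 2 * ℓ := by
    rw [sum_union (hcls.disjoint hm.1)]
    linarith
  have hJ : IsBlackComp ℓ w (cls u ∪ cls u') none := by
    refine ⟨⟨u, huJ⟩, fun hne => ?_, iff_of_true rfl hAB, fun _ => Or.inl hsum, by simp, by simp⟩
    obtain ⟨y, hy⟩ : ∃ y, y ∉ cls u ∪ cls u' := by
      by_contra! hall
      exact hne (eq_univ_of_forall hall)
    rw [← hclsu] at hy ⊢
    exact (hpart.chainConnected u).mono (hpart.isBlockMap.le_gap hpart.le_dist hy)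
  have hdiam : ∀ a ∈ cls u ∪ cls u', ∀ b ∈ cls u ∪ cls u', dist a b ≤ (4 * ℓ - 1) * dist u u' :=
    fun a ha b hb => (h.part.dist_le_of_light_union hw hm hA hB a ha b hb).trans
      (mul_le_mul_of_nonneg_right (by linarith) dist_nonneg)
  refine ⟨hpart, h.valid.addComp hJ (fun L hL => h.covers.disjoint hL hlight) (by simp),
    (h.calibrated.mono (by linarith) (h.part.le_dist u u' hm.1)).addComp hdiam
      ⟨u, huJ, u, huJ, by simp⟩ (absurd rfl),
    h.covers.mergeCls (fun x hx => ?_) fun x hx => iff_of_true ⟨_, mem_insert_self _ _, hx⟩ hAB⟩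
  simp [Forest.addComp, hx]

lemma Invariant.absorb (h : Invariant ℓ w cls δ f) (hw : ∀ v, 1 / 2 ≤ w v) (hℓ : 1 ≤ ℓ)
    (hm : IsMinCrossPair cls u u') (hA : ∑ v ∈ cls u, w v < ℓ) (hB : ℓ ≤ ∑ v ∈ cls u', w v)
    {J' : Finset R} (hJ' : J' ∈ f.comps) (hu' : u' ∈ J') :
    Invariant ℓ w (mergeCls cls u u') (dist u u') (f.addComp (cls u) (some (f.att J')) J') := by
  have hcls := h.part.isBlockMap
  have hδ : δ ≤ dist u u' := h.part.le_dist u u' hm.1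
  have hgapA : dist u u' ≤ gap (cls u) := hcls.le_gap hm.2 hm.1
  have hlight : ∀ x ∈ cls u, ∑ v ∈ cls x, w v < ℓ := fun x hx => by rwa [hcls.eq_of_mem hx]
  have hu : u ∉ J' := disjoint_right.mp (h.covers.disjoint hJ' hlight) (hcls.mem_self u)
  have hgapT : gap (f.att J') ≤ dist u u' := by
    by_cases hT : f.att J' = J'
    · rw [hT, dist_comm]
      exact gap_le hu' hu
    · exact (h.calibrated.gap_att_le J' hJ' hT).trans hδ
  have hminT : minDist (cls u) (f.att J') ≤ 5 * ℓ * dist u u' := by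
    obtain ⟨a, ha, b, hb, hab⟩ := h.calibrated.exists_dist_att_le J' hJ'
    have hu'a := h.calibrated.dist_le J' hJ' u' hu' a ha
    have hδ' : (4 * ℓ - 1) * δ ≤ (4 * ℓ - 1) * dist u u' :=
      mul_le_mul_of_nonneg_left hδ (by linarith)
    have := dist_triangle4 u u' a b
    have := minDist_le (hcls.mem_self u) hb
    nlinarith [dist_nonneg (x := u) (y := u')]
  have hJ : IsBlackComp ℓ w (cls u) (some (f.att J')) := by
    refine ⟨⟨u, hcls.mem_self u⟩, fun _ => (h.part.chainConnected u).mono (hδ.trans hgapA),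
      iff_of_false (by simp) hA.not_ge, by simp, ?_, ?_⟩ <;> rintro _ ⟨⟩
    · exact hgapT.trans hgapA
    · exact hminT.trans (mul_le_mul_of_nonneg_left hgapA (by linarith))
  have hdiam : ∀ a ∈ cls u, ∀ b ∈ cls u, dist a b ≤ (4 * ℓ - 1) * dist u u' := by
    intro a ha b hb
    have := half_le_sum hw (hcls.mem_self u)
    calc dist a b ≤ (2 * ∑ v ∈ cls u, w v - 1) * δ := h.part.dist_le_of_light u hA a ha b hb
      _ ≤ (2 * ∑ v ∈ cls u, w v - 1) * dist u u' :=
        mul_le_mul_of_nonneg_left hδ (by linarith)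
      _ ≤ (4 * ℓ - 1) * dist u u' := mul_le_mul_of_nonneg_right (by linarith) dist_nonneg
  refine ⟨h.part.merge hw hm, h.valid.addComp hJ (fun L hL => h.covers.disjoint hL hlight)
      fun T hT => ⟨hJ', (Option.some_inj.mp hT).symm⟩,
    (h.calibrated.mono (by linarith) hδ).addComp hdiam
      ⟨u', hu', u, hcls.mem_self u, (dist_comm u' u).le⟩ fun _ => gap_le (hcls.mem_self u) hm.1,
    h.covers.mergeCls (fun x hx => ?_) fun x hx => iff_of_true ?_
      (hB.trans (sum_mono_of_half_le hw subset_union_right))⟩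
  · simp [Forest.addComp, (not_or.mp (mem_union.not.mp hx)).1]
  · rcases mem_union.mp hx with hx | hx
    · exact ⟨_, mem_insert_self _ _, hx⟩
    · obtain ⟨L, hL, hxL⟩ := (h.covers x).mpr (by rwa [hcls.eq_of_mem hx])
      exact ⟨L, mem_insert_of_mem hL, hxL⟩

lemma Invariant.exists_step (h : Invariant ℓ w cls δ f) (hw : ∀ v, 1 / 2 ≤ w v) (hℓ : 1 ≤ ℓ)
    (hsep : ∃ x y, y ∉ cls x) :
    ∃ cls' δ' f', Invariant ℓ w cls' δ' f' ∧ sepCount cls' < sepCount cls := by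
  have hcls := h.part.isBlockMap
  obtain ⟨u, u', hm, horient⟩ : ∃ u u', IsMinCrossPair cls u u' ∧
      (ℓ ≤ ∑ v ∈ cls u, w v → ℓ ≤ ∑ v ∈ cls u', w v) := by
    obtain ⟨u, u', hm⟩ := exists_isMinCrossPair hsep
    by_cases hu : ℓ ≤ ∑ v ∈ cls u, w v → ℓ ≤ ∑ v ∈ cls u', w v
    · exact ⟨u, u', hm, hu⟩
    · push Not at hu
      exact ⟨u', u, hm.symm hcls, fun h' => absurd h' hu.2.not_ge⟩
  have hlt : sepCount (mergeCls cls u u') < sepCount cls :=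
    sepCount_lt_of_subset (hcls.subset_mergeCls u u') hm.1
      (by rw [mergeCls_of_mem (mem_union_left _ (hcls.mem_self u))]
          exact mem_union_right _ (hcls.mem_self u'))
  have hAB := fun x (hx : x ∈ cls u ∪ cls u') => hcls.eq_or_eq_of_mem_union hx
  refine ⟨mergeCls cls u u', dist u u', ?_⟩
  by_cases hA : ℓ ≤ ∑ v ∈ cls u, w v
  · refine ⟨f, h.merge hw hℓ hm fun x hx => iff_of_true ?_
      (hA.trans (sum_mono_of_half_le hw subset_union_left)), hlt⟩
    rcases hAB x hx with hx | hx <;> rw [hx]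
    exacts [hA, horient hA]
  by_cases hB : ℓ ≤ ∑ v ∈ cls u', w v
  · obtain ⟨J', hJ', hu'J'⟩ := (h.covers u').mpr hB
    exact ⟨_, h.absorb hw hℓ hm (not_le.mp hA) hB hJ' hu'J', hlt⟩
  by_cases hsum : ℓ ≤ ∑ v ∈ cls u ∪ cls u', w v
  · exact ⟨_, h.mergeRoot hw hℓ hm (not_le.mp hA) (not_le.mp hB) hsum, hlt⟩
  · refine ⟨f, h.merge hw hℓ hm fun x hx => iff_of_false ?_ hsum, hlt⟩
    rcases hAB x hx with hx | hx <;> rwa [hx]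

lemma Invariant.exists_complete {cls : R → Finset R} {δ : ℝ} {f : Forest R}
    (h : Invariant ℓ w cls δ f) (hw : ∀ v, 1 / 2 ≤ w v)
    (hℓ : 1 ≤ ℓ) : ∃ cls' δ' f', Invariant ℓ w cls' δ' f' ∧ ∀ x, cls' x = univ := by
  by_cases hsep : ∃ x y, y ∉ cls x
  · obtain ⟨cls', δ', f', h', hlt⟩ := h.exists_step hw hℓ hsep
    exact h'.exists_complete hw hℓ
  · push Not at hsep
    exact ⟨cls, δ, f, h, fun x => eq_univ_of_forall (hsep x)⟩
termination_by sepCount cls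

end Invariant

end BlackComponents

/-- Lemma 3.4: partition of the representatives into black components with a
degree-2 rooted forest structure (explicit constant `5ℓ` in Property (e)). -/
theorem stmt_5 {R : Type*} [MetricSpace R] [Fintype R] [DecidableEq R]
    (ℓ : ℝ) (hℓ : 1 ≤ ℓ)
    (w : R → ℝ) (hw : ∀ v : R, 1 / 2 ≤ w v) (hwsum : ℓ ≤ ∑ v : R, w v) :
    ∃ (𝒥 : Finset (Finset R)) (par : Finset R → Option (Finset R))
      (rk : Finset R → ℕ),
      -- 𝒥 is a partition of R into nonempty sets
      (∀ J ∈ 𝒥, J.Nonempty) ∧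
      (∀ J ∈ 𝒥, ∀ J' ∈ 𝒥, J ≠ J' → Disjoint J J') ∧
      𝒥.biUnion id = Finset.univ ∧
      -- par defines a rooted forest on 𝒥
      (∀ J ∈ 𝒥, ∀ J', par J = some J' → J' ∈ 𝒥 ∧ rk J' < rk J) ∧
      -- the six properties, with L(J) the distance from J to its complement
      (let L : Finset R → ℝ :=
        fun J => sInf {r : ℝ | ∃ v ∈ J, ∃ v', v' ∉ J ∧ r = dist v v'};
      -- (a) J is connected by edges of length at most L(J)
      (∀ J ∈ 𝒥, J ≠ Finset.univ → ∀ v ∈ J, ∀ v' ∈ J,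
        Relation.ReflTransGen (fun a b => a ∈ J ∧ b ∈ J ∧ dist a b ≤ L J) v v') ∧
      -- (b) roots are exactly the components of weight at least ℓ
      (∀ J ∈ 𝒥, (par J = none ↔ ℓ ≤ ∑ v ∈ J, w v)) ∧
      -- (c) a root has weight less than 2ℓ or is a singleton
      (∀ J ∈ 𝒥, par J = none → (∑ v ∈ J, w v) < 2 * ℓ ∨ J.card = 1) ∧
      -- (d) L values decrease towards the root
      (∀ J ∈ 𝒥, ∀ J', par J = some J' → L J' ≤ L J) ∧
      -- (e) a component is close to its parent
      (∀ J ∈ 𝒥, ∀ J', par J = some J' →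
        sInf {r : ℝ | ∃ v ∈ J, ∃ v' ∈ J', r = dist v v'} ≤ 5 * ℓ * L J) ∧
      -- (f) every component has at most two children
      (∀ J' ∈ 𝒥, (𝒥.filter (fun J => par J = some J')).card ≤ 2)) := by
  obtain ⟨cls, δ, f, h, huniv⟩ := (BlackComponents.Invariant.init ℓ w).exists_complete hw hℓ
  have hblack := h.valid.isBlackComp
  refine ⟨f.comps, f.par, f.rk, fun J hJ => (hblack J hJ).nonempty, h.valid.disjoint, ?_,
    h.valid.par_mem, fun J hJ => (hblack J hJ).chainConnected,
    fun J hJ => (hblack J hJ).eq_none_iff, fun J hJ => (hblack J hJ).sum_lt_or_card_eq_one,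
    fun J hJ => (hblack J hJ).gap_le, fun J hJ => (hblack J hJ).minDist_le,
    fun K hK => (Nat.le_add_right _ _).trans (h.valid.load_le K hK)⟩
  refine Finset.eq_univ_of_forall fun x => Finset.mem_biUnion.mpr ?_
  exact (h.covers x).mpr (by rwa [huniv])
end

section
/- Let (X,d) be a metric space; let F ⊆ X and C ⊆ X be finite sets; let x : F × C → ℝ be nonnegative with Σ_{i∈F} x_{i,j} = 1 for every j ∈ C; set d_av(j) := Σ_{i∈F} x_{i,j}·d(i,j) and D_i := Σ_{j∈C} x_{i,j}·(d(i,j) + d_av(j)). Let J ⊆ X be a finite nonempty set, B ⊆ F, and L ≥ 0 a real number, and write d(i,J) := min_{v∈J} d(i,v). Assume: (i) L ≤ 2·d(i',J) for every i' ∈ F∖B; and (ii) d(i,J) ≤ d(i,j) + 4·d_av(j) for every i ∈ B and j ∈ C. Then, with x_{B,j} := Σ_{i∈B} x_{i,j}, one has L · Σ_{j∈C} x_{B,j}·(1 − x_{B,j}) ≤ 10·Σ_{i∈B} D_i. -/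
/-- Lemma 4.2 (with explicit constant 10): `L(J)·π_J ≤ 10·D_B`. -/
theorem stmt_6 {X : Type*} [MetricSpace X] [DecidableEq X] (F C : Finset X) (x : X → X → ℝ)
    (hx : ∀ i ∈ F, ∀ j ∈ C, 0 ≤ x i j)
    (hsum : ∀ j ∈ C, ∑ i ∈ F, x i j = 1)
    (J : Finset X) (hJ : J.Nonempty) (B : Finset X) (hBF : B ⊆ F)
    (L : ℝ) (hL : 0 ≤ L)
    (h1 : ∀ i' ∈ F \ B, L ≤ 2 * J.inf' hJ (fun v => dist i' v))
    (h2 : ∀ i ∈ B, ∀ j ∈ C,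
      J.inf' hJ (fun v => dist i v) ≤ dist i j + 4 * ∑ i' ∈ F, x i' j * dist i' j) :
    L * ∑ j ∈ C, (∑ i ∈ B, x i j) * (1 - ∑ i ∈ B, x i j) ≤
      10 * ∑ i ∈ B, ∑ j ∈ C, x i j * (dist i j + ∑ i' ∈ F, x i' j * dist i' j) := by
  have hmain : ∀ j ∈ C,
      L * ((∑ i ∈ B, x i j) * (1 - ∑ i ∈ B, x i j)) ≤
      10 * ∑ i ∈ B, x i j * (dist i j + ∑ i' ∈ F, x i' j * dist i' j) := by
    intro j hj
    set dav := ∑ i' ∈ F, x i' j * dist i' j with hdav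
    set a := ∑ i ∈ B, x i j with hadef
    set b := ∑ i' ∈ F \ B, x i' j with hbdef
    set T := ∑ i' ∈ F \ B, x i' j * dist i' j with hTdef
    set A := ∑ i ∈ B, x i j * dist i j with hAdef
    clear_value dav a b T A
    have hdav0 : 0 ≤ dav := hdav ▸ Finset.sum_nonneg fun i hi =>
      mul_nonneg (hx i hi j hj) dist_nonneg
    have hba : b + a = 1 := by
      rw [hbdef, hadef, Finset.sum_sdiff hBF]
      exact hsum j hj
    have ha0 : 0 ≤ a := hadef ▸ Finset.sum_nonneg fun i hi => hx i (hBF hi) j hj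
    have hb0 : 0 ≤ b := hbdef ▸ Finset.sum_nonneg fun i hi =>
      hx i (Finset.mem_sdiff.mp hi).1 j hj
    have hT0 : 0 ≤ T := hTdef ▸ Finset.sum_nonneg fun i hi =>
      mul_nonneg (hx i (Finset.mem_sdiff.mp hi).1 j hj) dist_nonneg
    have hA0 : 0 ≤ A := hAdef ▸ Finset.sum_nonneg fun i hi =>
      mul_nonneg (hx i (hBF hi) j hj) dist_nonneg
    have hTd : T + A = dav := by
      rw [hTdef, hAdef, hdav, Finset.sum_sdiff hBF]
    have hstep : ∀ i ∈ B, L * b ≤ 2 * T + b * (4 * dist i j + 8 * dav) := by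
      intro i hi
      have hLb : L * b = ∑ i' ∈ F \ B, x i' j * L := by
        rw [hbdef, ← Finset.sum_mul, mul_comm]
      rw [hLb]
      have hle : ∀ i' ∈ F \ B,
          x i' j * L ≤ x i' j * (2 * dist i' j + 4 * dist i j + 8 * dav) := by
        intro i' hi'
        have hx' : 0 ≤ x i' j := hx i' (Finset.mem_sdiff.mp hi').1 j hj
        have hL1 := h1 i' hi'
        obtain ⟨v, hv, hveq⟩ := Finset.exists_mem_eq_inf' hJ (fun v => dist i v)
        have h1' : J.inf' hJ (fun v => dist i' v) ≤ dist i' v := Finset.inf'_le _ hv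
        have htri : dist i' v ≤ dist i' j + dist j i + dist i v := dist_triangle4 i' j i v
        have h2' := h2 i hi j hj
        have hvi : dist i v = J.inf' hJ (fun v => dist i v) := hveq.symm
        have hLbound : L ≤ 2 * dist i' j + 4 * dist i j + 8 * dav := by
          have hc : dist j i = dist i j := dist_comm j i
          rw [← hdav] at h2'
          nlinarith [hL1, h1', htri, h2', hvi]
        exact mul_le_mul_of_nonneg_left hLbound hx'
      calc ∑ i' ∈ F \ B, x i' j * L
          ≤ ∑ i' ∈ F \ B, x i' j * (2 * dist i' j + 4 * dist i j + 8 * dav) :=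
            Finset.sum_le_sum hle
        _ = 2 * T + b * (4 * dist i j + 8 * dav) := by
            simp only [hTdef, hbdef, Finset.mul_sum, Finset.sum_mul, ← Finset.sum_add_distrib]
            exact Finset.sum_congr rfl fun i' _ => by ring
    have hb1 : 1 - a = b := by linarith
    rw [hb1]
    have hexp : L * (a * b) = ∑ i ∈ B, x i j * (L * b) := by
      rw [← Finset.sum_mul, ← hadef]
      ring
    have hsum2 : L * (a * b) ≤ ∑ i ∈ B, x i j * (2 * T + b * (4 * dist i j + 8 * dav)) := by
      rw [hexp]
      exact Finset.sum_le_sum fun i hi =>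
        mul_le_mul_of_nonneg_left (hstep i hi) (hx i (hBF hi) j hj)
    have hrhs : ∑ i ∈ B, x i j * (2 * T + b * (4 * dist i j + 8 * dav))
        = 2 * a * T + 4 * b * A + 8 * (a * b) * dav := by
      simp only [hadef, hAdef, Finset.mul_sum, Finset.sum_mul, ← Finset.sum_add_distrib]
      exact Finset.sum_congr rfl fun i _ => by ring
    have hgoal : ∑ i ∈ B, x i j * (dist i j + dav) = A + a * dav := by
      simp only [hAdef, hadef, Finset.sum_mul, ← Finset.sum_add_distrib]
      exact Finset.sum_congr rfl fun i _ => by ring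
    rw [hgoal]
    rw [hrhs] at hsum2
    nlinarith [mul_nonneg ha0 (by linarith : 0 ≤ dav - T), mul_nonneg ha0 hA0,
      mul_nonneg (mul_nonneg ha0 ha0) hdav0, mul_nonneg ha0 hdav0]
  calc L * ∑ j ∈ C, (∑ i ∈ B, x i j) * (1 - ∑ i ∈ B, x i j)
      = ∑ j ∈ C, L * ((∑ i ∈ B, x i j) * (1 - ∑ i ∈ B, x i j)) := Finset.mul_sum _ _ _
    _ ≤ ∑ j ∈ C, 10 * ∑ i ∈ B, x i j * (dist i j + ∑ i' ∈ F, x i' j * dist i' j) :=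
        Finset.sum_le_sum hmain
    _ = 10 * ∑ i ∈ B, ∑ j ∈ C, x i j * (dist i j + ∑ i' ∈ F, x i' j * dist i' j) := by
        rw [← Finset.mul_sum, Finset.sum_comm]
end

section
/- Let Ω be a finite set with weights ζ : Ω → ℝ satisfying ζ(ω) ≥ 0 and Σ_{ω∈Ω} ζ(ω) = 1. Let C be a finite index set and for each j ∈ C let X_j : Ω → ℝ satisfy 0 ≤ X_j(ω) ≤ 1 for all ω. Put p_j := Σ_ω ζ(ω)·X_j(ω), μ := Σ_{j∈C} p_j, and π := Σ_{j∈C} p_j·(1 − p_j). If μ > 0 and ℓ ≥ 1 is a real number, then Σ_{ω : Σ_{j∈C} X_j(ω) < (1 − 1/ℓ)·μ} ζ(ω) ≤ ℓ·π/μ. -/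
open scoped Classical in
/-- Lemma 4.4: the probability that the total service falls below `(1−1/ℓ)`
times its expectation is at most `ℓπ/μ`. -/
theorem stmt_7 {Ω : Type*} [Fintype Ω] {C : Type*} [Fintype C]
    (ζ : Ω → ℝ) (hζ : ∀ ω, 0 ≤ ζ ω) (hζ1 : ∑ ω, ζ ω = 1)
    (X : C → Ω → ℝ) (hX : ∀ j ω, 0 ≤ X j ω ∧ X j ω ≤ 1)
    (ℓ : ℝ) (hℓ : 1 ≤ ℓ) :
    let p : C → ℝ := fun j => ∑ ω, ζ ω * X j ω
    let μ : ℝ := ∑ j, p j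
    let π : ℝ := ∑ j, p j * (1 - p j)
    0 < μ →
      ∑ ω ∈ Finset.univ.filter (fun ω => ∑ j, X j ω < (1 - 1 / ℓ) * μ), ζ ω ≤
        ℓ * π / μ := by
  intro p μ π hμ
  set A := Finset.univ.filter (fun ω => ∑ j, X j ω < (1 - 1 / ℓ) * μ) with hA
  have hℓ0 : (0:ℝ) < ℓ := lt_of_lt_of_le one_pos hℓ
  have hp0 : ∀ j, 0 ≤ p j := fun j =>
    Finset.sum_nonneg fun ω _ => mul_nonneg (hζ ω) (hX j ω).1
  have hp1 : ∀ j, p j ≤ 1 := by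
    intro j
    calc p j = ∑ ω, ζ ω * X j ω := rfl
      _ ≤ ∑ ω, ζ ω * 1 := Finset.sum_le_sum fun ω _ =>
          mul_le_mul_of_nonneg_left (hX j ω).2 (hζ ω)
      _ = 1 := by simpa using hζ1
  set g : Ω → ℝ := fun ω => ∑ j, X j ω * (1 - p j) with hg
  have hg0 : ∀ ω, 0 ≤ g ω := fun ω =>
    Finset.sum_nonneg fun j _ => mul_nonneg (hX j ω).1 (by linarith [hp1 j])
  have hgle : ∀ ω, (∑ j, X j ω) - μ ≤ g ω := by
    intro ω
    have hμdef : μ = ∑ j, p j := rfl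
    calc (∑ j, X j ω) - μ = ∑ j, (X j ω - p j) := by
          rw [hμdef, Finset.sum_sub_distrib]
      _ ≤ ∑ j, X j ω * (1 - p j) := by
          apply Finset.sum_le_sum
          intro j _
          nlinarith [(hX j ω).2, hp0 j]
      _ = g ω := rfl
  have hES : ∑ ω, ζ ω * (∑ j, X j ω) = μ := by
    simp_rw [Finset.mul_sum]
    rw [Finset.sum_comm]
  have hEg : ∑ ω, ζ ω * g ω = π := by
    show ∑ ω, ζ ω * (∑ j, X j ω * (1 - p j)) = π
    simp_rw [Finset.mul_sum]
    rw [Finset.sum_comm]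
    have : ∀ j, ∑ ω, ζ ω * (X j ω * (1 - p j)) = p j * (1 - p j) := by
      intro j
      rw [show p j * (1 - p j) = (∑ ω, ζ ω * X j ω) * (1 - p j) from rfl,
        Finset.sum_mul]
      exact Finset.sum_congr rfl fun ω _ => (mul_assoc _ _ _).symm
    simpa using Finset.sum_congr rfl fun j _ => this j
  have key : (∑ ω ∈ A, ζ ω) * (μ / ℓ) ≤ π := by
    have h1 : (∑ ω ∈ A, ζ ω) * (μ / ℓ) ≤ ∑ ω ∈ A, ζ ω * (μ - ∑ j, X j ω) := by
      rw [Finset.sum_mul]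
      apply Finset.sum_le_sum
      intro ω hω
      have hωA : ∑ j, X j ω < (1 - 1 / ℓ) * μ := (Finset.mem_filter.mp hω).2
      have h2 : μ / ℓ ≤ μ - ∑ j, X j ω := by
        have : (1 - 1 / ℓ) * μ = μ - μ / ℓ := by ring
        linarith
      exact mul_le_mul_of_nonneg_left h2 (hζ ω)
    have htot : ∑ ω, ζ ω * (μ - ∑ j, X j ω) = 0 := by
      simp_rw [mul_sub]
      rw [Finset.sum_sub_distrib, hES, ← Finset.sum_mul, hζ1, one_mul, sub_self]
    have hsplit :
        (∑ ω ∈ A, ζ ω * (μ - ∑ j, X j ω)) +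
          (∑ ω ∈ Aᶜ, ζ ω * (μ - ∑ j, X j ω)) = 0 := by
      rw [Finset.sum_add_sum_compl, htot]
    have h3 : ∑ ω ∈ A, ζ ω * (μ - ∑ j, X j ω) =
        ∑ ω ∈ Aᶜ, ζ ω * ((∑ j, X j ω) - μ) := by
      have : ∑ ω ∈ Aᶜ, ζ ω * ((∑ j, X j ω) - μ) =
          -∑ ω ∈ Aᶜ, ζ ω * (μ - ∑ j, X j ω) := by
        rw [← Finset.sum_neg_distrib]
        exact Finset.sum_congr rfl fun ω _ => by ring
      rw [this]; linarith
    have h4 : ∑ ω ∈ Aᶜ, ζ ω * ((∑ j, X j ω) - μ) ≤ ∑ ω ∈ Aᶜ, ζ ω * g ω :=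
      Finset.sum_le_sum fun ω _ => mul_le_mul_of_nonneg_left (hgle ω) (hζ ω)
    have h5 : ∑ ω ∈ Aᶜ, ζ ω * g ω ≤ ∑ ω, ζ ω * g ω :=
      Finset.sum_le_sum_of_subset_of_nonneg (Finset.subset_univ _)
        (fun ω _ _ => mul_nonneg (hζ ω) (hg0 ω))
    calc (∑ ω ∈ A, ζ ω) * (μ / ℓ) ≤ ∑ ω ∈ A, ζ ω * (μ - ∑ j, X j ω) := h1
      _ = ∑ ω ∈ Aᶜ, ζ ω * ((∑ j, X j ω) - μ) := h3
      _ ≤ ∑ ω ∈ Aᶜ, ζ ω * g ω := h4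
      _ ≤ ∑ ω, ζ ω * g ω := h5
      _ = π := hEg
  have hfin : (∑ ω ∈ A, ζ ω) * μ ≤ ℓ * π := by
    have h := mul_le_mul_of_nonneg_right key hℓ0.le
    calc (∑ ω ∈ A, ζ ω) * μ = (∑ ω ∈ A, ζ ω) * (μ / ℓ) * ℓ := by
          field_simp
      _ ≤ π * ℓ := h
      _ = ℓ * π := mul_comm _ _
  rw [le_div_iff₀ hμ]
  exact hfin
end

section
/- Let Ω be a finite set with weights ζ : Ω → ℝ satisfying ζ(ω) ≥ 0 and Σ_{ω∈Ω} ζ(ω) = 1. Let M : Ω → ℝ be nonnegative and set y := Σ_ω ζ(ω)·M(ω). Let C be a finite index set and for each j ∈ C let X_j : Ω → ℝ satisfy 0 ≤ X_j(ω) ≤ 1 for all ω; put p_j := Σ_ω ζ(ω)·X_j(ω), μ := Σ_{j∈C} p_j, and π := Σ_{j∈C} p_j·(1 − p_j). If ℓ > 1 is real, μ > 0, and π ≤ μ/(2ℓ²), then Σ_{ω ∈ G} ζ(ω) ≥ 1/(2ℓ), where G := {ω ∈ Ω : M(ω)·(1 − 1/ℓ) ≤ y and Σ_{j∈C} X_j(ω)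 ≥ (1 − 1/ℓ)·μ}. -/
open scoped Classical in
/-- The claim `Q ≥ 1/(2ℓ)` from Section 4.2: for a concentrated component,
the total probability mass of good pairs is at least `1/(2ℓ)`. -/
theorem stmt_8 {Ω : Type*} [Fintype Ω] {C : Type*} [Fintype C]
    (ζ : Ω → ℝ) (hζ : ∀ ω, 0 ≤ ζ ω) (hζ1 : ∑ ω, ζ ω = 1)
    (M : Ω → ℝ) (hM : ∀ ω, 0 ≤ M ω)
    (X : C → Ω → ℝ) (hX : ∀ j ω, 0 ≤ X j ω ∧ X j ω ≤ 1)
    (ℓ : ℝ) (hℓ : 1 < ℓ) :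
    let y : ℝ := ∑ ω, ζ ω * M ω
    let p : C → ℝ := fun j => ∑ ω, ζ ω * X j ω
    let μ : ℝ := ∑ j, p j
    let π : ℝ := ∑ j, p j * (1 - p j)
    0 < μ → π ≤ μ / (2 * ℓ ^ 2) →
      1 / (2 * ℓ) ≤
        ∑ ω ∈ Finset.univ.filter
          (fun ω => M ω * (1 - 1 / ℓ) ≤ y ∧ (1 - 1 / ℓ) * μ ≤ ∑ j, X j ω), ζ ω := by
  intro y p μ π hμ hπ
  have hℓ0 : (0:ℝ) < ℓ := lt_trans one_pos hℓ
  have hfrac : 0 < 1 - 1 / ℓ := by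
    have h1 : 1 / ℓ < 1 := (div_lt_one hℓ0).2 hℓ
    linarith
  have hp0 : ∀ j, 0 ≤ p j := fun j =>
    Finset.sum_nonneg fun ω _ => mul_nonneg (hζ ω) (hX j ω).1
  have hp1 : ∀ j, p j ≤ 1 := by
    intro j
    calc p j ≤ ∑ ω, ζ ω * 1 :=
          Finset.sum_le_sum fun ω _ => mul_le_mul_of_nonneg_left (hX j ω).2 (hζ ω)
      _ = 1 := by simpa using hζ1
  set A : Finset Ω := Finset.univ.filter (fun ω => ¬ (M ω * (1 - 1 / ℓ) ≤ y)) with hA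
  set B : Finset Ω := Finset.univ.filter (fun ω => ¬ ((1 - 1 / ℓ) * μ ≤ ∑ j, X j ω)) with hB
  set G : Finset Ω := Finset.univ.filter
      (fun ω => M ω * (1 - 1 / ℓ) ≤ y ∧ (1 - 1 / ℓ) * μ ≤ ∑ j, X j ω) with hG
  -- the splitting: 1 ≤ ∑_G ζ + ∑_A ζ + ∑_B ζ
  have hy0 : 0 ≤ y := Finset.sum_nonneg fun ω _ => mul_nonneg (hζ ω) (hM ω)
  have hsplit : (1:ℝ) ≤ ∑ ω ∈ G, ζ ω + (∑ ω ∈ A, ζ ω + ∑ ω ∈ B, ζ ω) := by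
    have hsub : Finset.univ.filter
        (fun ω => ¬ (M ω * (1 - 1 / ℓ) ≤ y ∧ (1 - 1 / ℓ) * μ ≤ ∑ j, X j ω)) ⊆ A ∪ B := by
      intro ω hω
      simp only [Finset.mem_filter, Finset.mem_univ, true_and] at hω
      rw [Finset.mem_union, hA, hB]
      simp only [Finset.mem_filter, Finset.mem_univ, true_and]
      tauto
    have h1 : ∑ ω ∈ Finset.univ.filter
        (fun ω => ¬ (M ω * (1 - 1 / ℓ) ≤ y ∧ (1 - 1 / ℓ) * μ ≤ ∑ j, X j ω)), ζ ω
        ≤ ∑ ω ∈ A ∪ B, ζ ω :=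
      Finset.sum_le_sum_of_subset_of_nonneg hsub (fun ω _ _ => hζ ω)
    have h2 : ∑ ω ∈ A ∪ B, ζ ω ≤ ∑ ω ∈ A, ζ ω + ∑ ω ∈ B, ζ ω := by
      have := Finset.sum_union_inter (s₁ := A) (s₂ := B) (f := ζ)
      have h3 : 0 ≤ ∑ ω ∈ A ∩ B, ζ ω := Finset.sum_nonneg fun ω _ => hζ ω
      linarith
    have h4 := Finset.sum_filter_add_sum_filter_not Finset.univ
      (fun ω => M ω * (1 - 1 / ℓ) ≤ y ∧ (1 - 1 / ℓ) * μ ≤ ∑ j, X j ω) ζ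
    rw [hζ1] at h4
    rw [hG]
    linarith
  -- Markov for A
  have hqA : ∑ ω ∈ A, ζ ω ≤ 1 - 1 / ℓ := by
    by_cases hy : y = 0
    · have hzero : ∀ ω ∈ A, ζ ω = 0 := by
        intro ω hω
        rw [hA] at hω
        simp only [Finset.mem_filter, Finset.mem_univ, true_and, not_le] at hω
        rw [hy] at hω
        have hMpos : 0 < M ω := by
          by_contra h
          push_neg at h
          nlinarith [hM ω]
        have hall : ∀ ω' ∈ Finset.univ, 0 ≤ ζ ω' * M ω' :=
          fun ω' _ => mul_nonneg (hζ ω') (hM ω')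
        have := (Finset.sum_eq_zero_iff_of_nonneg hall).1 hy ω (Finset.mem_univ ω)
        have hζM : ζ ω * M ω = 0 := this
        rcases mul_eq_zero.1 hζM with h | h
        · exact h
        · exact absurd h (ne_of_gt hMpos)
      rw [Finset.sum_eq_zero hzero]
      linarith
    · have hypos : 0 < y := lt_of_le_of_ne hy0 (Ne.symm hy)
      have key : (∑ ω ∈ A, ζ ω) * y ≤ (1 - 1 / ℓ) * y := by
        have h1 : ∀ ω ∈ A, ζ ω * y ≤ (1 - 1 / ℓ) * (ζ ω * M ω) := by
          intro ω hω
          rw [hA] at hω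
          simp only [Finset.mem_filter, Finset.mem_univ, true_and, not_le] at hω
          nlinarith [hζ ω]
        calc (∑ ω ∈ A, ζ ω) * y = ∑ ω ∈ A, ζ ω * y := by rw [Finset.sum_mul]
          _ ≤ ∑ ω ∈ A, (1 - 1 / ℓ) * (ζ ω * M ω) := Finset.sum_le_sum h1
          _ = (1 - 1 / ℓ) * ∑ ω ∈ A, ζ ω * M ω := by rw [Finset.mul_sum]
          _ ≤ (1 - 1 / ℓ) * y := by
              apply mul_le_mul_of_nonneg_left _ (le_of_lt hfrac)
              exact Finset.sum_le_sum_of_subset_of_nonneg (Finset.subset_univ A)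
                (fun ω _ _ => mul_nonneg (hζ ω) (hM ω))
      exact le_of_mul_le_mul_right key hypos
  -- Markov for B
  have hqB : ∑ ω ∈ B, ζ ω ≤ 1 / (2 * ℓ) := by
    have hswap : ∑ ω, ζ ω * ∑ j, p j * (1 - X j ω) = π := by
      have h1 : ∀ ω, ζ ω * ∑ j, p j * (1 - X j ω)
          = ∑ j, ζ ω * (p j * (1 - X j ω)) := fun ω => Finset.mul_sum _ _ _
      simp_rw [h1]
      rw [Finset.sum_comm]
      refine Finset.sum_congr rfl fun j _ => ?_
      calc ∑ ω, ζ ω * (p j * (1 - X j ω)) = ∑ ω, p j * (ζ ω - ζ ω * X j ω) := by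
            refine Finset.sum_congr rfl fun ω _ => ?_
            ring
        _ = p j * ((∑ ω, ζ ω) - ∑ ω, ζ ω * X j ω) := by
            rw [← Finset.mul_sum, Finset.sum_sub_distrib]
        _ = p j * (1 - p j) := by rw [hζ1]
    have key : (μ / ℓ) * ∑ ω ∈ B, ζ ω ≤ μ / (2 * ℓ ^ 2) := by
      have h1 : ∀ ω ∈ B, (μ / ℓ) * ζ ω ≤ ζ ω * ∑ j, p j * (1 - X j ω) := by
        intro ω hω
        rw [hB] at hω
        simp only [Finset.mem_filter, Finset.mem_univ, true_and, not_le] at hω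
        have hS : μ / ℓ ≤ μ - ∑ j, X j ω := by
          have : μ - (1 - 1 / ℓ) * μ = μ / ℓ := by field_simp; ring
          linarith
        have hS2 : μ - ∑ j, X j ω ≤ ∑ j, p j * (1 - X j ω) := by
          have : μ - ∑ j, X j ω = ∑ j, (p j - X j ω) := by
            rw [Finset.sum_sub_distrib]
          rw [this]
          refine Finset.sum_le_sum fun j _ => ?_
          nlinarith [(hX j ω).1, (hX j ω).2, hp0 j, hp1 j]
        calc (μ / ℓ) * ζ ω ≤ (μ - ∑ j, X j ω) * ζ ω :=
              mul_le_mul_of_nonneg_right hS (hζ ω)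
          _ ≤ (∑ j, p j * (1 - X j ω)) * ζ ω :=
              mul_le_mul_of_nonneg_right hS2 (hζ ω)
          _ = ζ ω * ∑ j, p j * (1 - X j ω) := by ring
      calc (μ / ℓ) * ∑ ω ∈ B, ζ ω = ∑ ω ∈ B, (μ / ℓ) * ζ ω := by rw [Finset.mul_sum]
        _ ≤ ∑ ω ∈ B, ζ ω * ∑ j, p j * (1 - X j ω) := Finset.sum_le_sum h1
        _ ≤ ∑ ω, ζ ω * ∑ j, p j * (1 - X j ω) := by
            refine Finset.sum_le_sum_of_subset_of_nonneg (Finset.subset_univ B)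
              (fun ω _ _ => mul_nonneg (hζ ω) (Finset.sum_nonneg fun j _ =>
                mul_nonneg (hp0 j) (by linarith [(hX j ω).2])))
        _ = π := hswap
        _ ≤ μ / (2 * ℓ ^ 2) := hπ
    have hμℓ : 0 < μ / ℓ := div_pos hμ hℓ0
    have heq : μ / (2 * ℓ ^ 2) = (μ / ℓ) * (1 / (2 * ℓ)) := by
      rw [div_mul_div_comm, mul_one]
      ring_nf
    rw [heq] at key
    exact le_of_mul_le_mul_left key hμℓ
  have harith : 1 / ℓ = 2 * (1 / (2 * ℓ)) := by
    field_simp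
  linarith
end

section
/- Let Ω be a finite set, ψ : Ω → ℝ with ψ(ω) ≥ 0 and Σ_ω ψ(ω) = 1, and n : Ω → ℕ. Let ℓ and ℓ₁ be integers with 2 ≤ ℓ ≤ 2ℓ₁, and suppose s := Σ_ω ψ(ω)·n(ω) ≤ ℓ₁. Then there exists ψ' : Ω → ℝ with ψ'(ω) ≥ 0 and Σ_ω ψ'(ω) = 1 such that: (i) ψ'(ω) ≤ 2ℓ₁(ℓ₁+1)·ψ(ω) for every ω ∈ Ω; (ii) every ω with ψ'(ω) > 0 has n(ω) ≤ ⌈s⌉; and (iii) Σ_ω ψ'(ω)·max(n(ω), ⌊s⌋) ≤ s. -/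
set_option maxHeartbeats 1000000

open Finset

/-- Lemma 4.6 (with the `O(ℓ²)` factor made explicit as `2ℓ₁(ℓ₁+1)`):
massaging a distribution so that all outcomes open between `⌊s⌋` and `⌈s⌉`
facilities in the averaged sense. -/
theorem stmt_9 {Ω : Type*} [Fintype Ω]
    (ψ : Ω → ℝ) (hψ : ∀ ω, 0 ≤ ψ ω) (hψ1 : ∑ ω, ψ ω = 1)
    (n : Ω → ℕ) (ℓ ℓ₁ : ℤ) (hℓ : 2 ≤ ℓ) (hℓℓ₁ : ℓ ≤ 2 * ℓ₁)
    (hs : ∑ ω, ψ ω * (n ω : ℝ) ≤ (ℓ₁ : ℝ)) :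
    ∃ ψ' : Ω → ℝ, (∀ ω, 0 ≤ ψ' ω) ∧ (∑ ω, ψ' ω = 1) ∧
      (∀ ω, ψ' ω ≤ (2 * ℓ₁ * (ℓ₁ + 1) : ℤ) * ψ ω) ∧
      (∀ ω, 0 < ψ' ω → (n ω : ℤ) ≤ ⌈∑ ω', ψ ω' * (n ω' : ℝ)⌉) ∧
      (∑ ω, ψ' ω * max (n ω : ℝ) ((⌊∑ ω', ψ ω' * (n ω' : ℝ)⌋ : ℤ) : ℝ) ≤
        ∑ ω', ψ ω' * (n ω' : ℝ)) := by
  classical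
  have hℓ₁ : (1:ℤ) ≤ ℓ₁ := by omega
  set s : ℝ := ∑ ω, ψ ω * (n ω : ℝ) with hsdef
  have hs0 : 0 ≤ s := Finset.sum_nonneg fun ω _ => mul_nonneg (hψ ω) (Nat.cast_nonneg _)
  set t : ℤ := ⌊s⌋ with htdef
  have ht0 : (0:ℤ) ≤ t := Int.floor_nonneg.mpr hs0
  have ht0r : (0:ℝ) ≤ (t:ℝ) := by exact_mod_cast ht0
  have hts : (t:ℝ) ≤ s := Int.floor_le s
  have hslt : s < (t:ℝ) + 1 := Int.lt_floor_add_one s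
  have htceil : t ≤ ⌈s⌉ := Int.floor_le_ceil s
  have hceil_le : ⌈s⌉ ≤ ℓ₁ := Int.ceil_le.mpr hs
  have htℓ : t ≤ ℓ₁ := le_trans htceil hceil_le
  set L : ℝ := (ℓ₁ : ℝ) with hLdef
  have hL1 : (1:ℝ) ≤ L := by rw [hLdef]; exact_mod_cast hℓ₁
  have hCcast : ((2 * ℓ₁ * (ℓ₁ + 1) : ℤ) : ℝ) = 2*L*(L+1) := by rw [hLdef]; push_cast; ring
  have htL : (t:ℝ) ≤ L := by rw [hLdef]; exact_mod_cast htℓ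
  set p : Ω → Prop := fun ω => (n ω : ℤ) ≤ t with hp
  set q : Ω → Prop := fun ω => (n ω : ℤ) = t + 1 with hq
  set a : ℝ := ∑ ω ∈ univ.filter p, ψ ω with ha
  set b : ℝ := ∑ ω ∈ univ.filter (fun ω => ¬ p ω ∧ q ω), ψ ω with hb
  set d : ℝ := ∑ ω ∈ univ.filter (fun ω => ¬ p ω ∧ ¬ q ω), ψ ω with hd
  clear_value s t L
  have ha0 : 0 ≤ a := sum_nonneg fun ω _ => hψ ω
  have hb0 : 0 ≤ b := sum_nonneg fun ω _ => hψ ω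
  have hd0 : 0 ≤ d := sum_nonneg fun ω _ => hψ ω
  clear_value a b d
  have habd : a + b + d = 1 := by
    have hpt : ∀ ω, ψ ω = (if p ω then ψ ω else 0) + (if ¬ p ω ∧ q ω then ψ ω else 0)
        + (if ¬ p ω ∧ ¬ q ω then ψ ω else 0) := by
      intro ω
      by_cases h1 : p ω
      · rw [if_pos h1, if_neg (fun h => h.1 h1), if_neg (fun h => h.1 h1)]; ring
      · by_cases h2 : q ω
        · rw [if_neg h1, if_pos ⟨h1, h2⟩, if_neg (fun h => h.2 h2)]; ring
        · rw [if_neg h1, if_neg (fun h => h2 h.2), if_pos ⟨h1, h2⟩]; ring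
    calc a + b + d
        = ∑ ω, ((if p ω then ψ ω else 0) + (if ¬ p ω ∧ q ω then ψ ω else 0)
            + (if ¬ p ω ∧ ¬ q ω then ψ ω else 0)) := by
          rw [ha, hb, hd, sum_filter, sum_filter, sum_filter,
            Finset.sum_add_distrib, Finset.sum_add_distrib]
      _ = ∑ ω, ψ ω := Finset.sum_congr rfl fun ω _ => (hpt ω).symm
      _ = 1 := hψ1
  have hkey : ((t:ℝ)+1)*b + ((t:ℝ)+2)*d ≤ s := by
    have step : ∑ ω, ((if ¬ p ω ∧ q ω then ((t:ℝ)+1) * ψ ω else 0)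
        + (if ¬ p ω ∧ ¬ q ω then ((t:ℝ)+2) * ψ ω else 0)) ≤ s := by
      rw [hsdef]
      apply Finset.sum_le_sum
      intro ω _
      by_cases h1 : p ω
      · rw [if_neg (fun h => h.1 h1), if_neg (fun h => h.1 h1)]
        simpa using mul_nonneg (hψ ω) (Nat.cast_nonneg (n ω))
      · by_cases h2 : q ω
        · have hn : (n ω : ℝ) = (t:ℝ) + 1 := by exact_mod_cast h2
          rw [if_pos ⟨h1, h2⟩, if_neg (fun h => h.2 h2), hn]
          exact le_of_eq (by ring)
        · have hn : (t:ℝ) + 2 ≤ (n ω : ℝ) := by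
            have : t + 2 ≤ (n ω : ℤ) := by
              simp only [hp, not_le] at h1
              simp only [hq] at h2
              omega
            exact_mod_cast this
          have hmul := mul_le_mul_of_nonneg_left hn (hψ ω)
          rw [if_neg (fun h => h2 h.2), if_pos ⟨h1, h2⟩]
          linarith
    calc ((t:ℝ)+1)*b + ((t:ℝ)+2)*d
        = ∑ ω, ((if ¬ p ω ∧ q ω then ((t:ℝ)+1) * ψ ω else 0)
            + (if ¬ p ω ∧ ¬ q ω then ((t:ℝ)+2) * ψ ω else 0)) := by
          rw [hb, hd, Finset.mul_sum, Finset.mul_sum, sum_filter, sum_filter,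
            Finset.sum_add_distrib]
      _ ≤ s := step
  have h1 : ((t:ℝ)+1)*(1-a) ≤ s := by
    have hda : (1:ℝ) - a = b + d := by linarith
    rw [hda]
    nlinarith [hkey, hd0, ht0r]
  by_cases hcase : 1 ≤ 2*L*(L+1) * a
  · -- conditional on A = {n ≤ t}
    have hC0 : (0:ℝ) < 2*L*(L+1) := by nlinarith
    have ha0' : 0 < a := by
      by_contra hcon
      push_neg at hcon
      have := mul_le_mul_of_nonneg_left hcon (le_of_lt hC0)
      rw [mul_zero] at this
      linarith
    refine ⟨fun ω => if p ω then ψ ω / a else 0, ?_, ?_, ?_, ?_, ?_⟩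
    · intro ω
      dsimp only
      by_cases h : p ω
      · rw [if_pos h]; exact div_nonneg (hψ ω) ha0
      · rw [if_neg h]
    · dsimp only
      rw [← Finset.sum_filter, ← Finset.sum_div, ← ha]
      exact div_self (ne_of_gt ha0')
    · intro ω
      dsimp only
      rw [hCcast]
      by_cases h : p ω
      · rw [if_pos h, div_le_iff₀ ha0']
        nlinarith [hcase, hψ ω]
      · rw [if_neg h]
        exact mul_nonneg (le_of_lt hC0) (hψ ω)
    · intro ω hpos
      by_cases h : p ω
      · exact le_trans h htceil
      · dsimp only at hpos
        rw [if_neg h] at hpos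
        exact absurd hpos (lt_irrefl 0)
    · dsimp only
      have hpt : ∀ ω, (if p ω then ψ ω / a else 0) * max (n ω:ℝ) ((t:ℝ))
          = (if p ω then ((t:ℝ)/a) * ψ ω else 0) := by
        intro ω
        by_cases h : p ω
        · have hn : (n ω : ℝ) ≤ (t:ℝ) := by exact_mod_cast h
          rw [if_pos h, if_pos h, max_eq_right hn]; ring
        · rw [if_neg h, if_neg h, zero_mul]
      rw [Finset.sum_congr rfl fun ω _ => hpt ω, ← Finset.sum_filter, ← Finset.mul_sum, ← ha]
      rw [div_mul_cancel₀ _ (ne_of_gt ha0')]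
      exact hts
  · -- mixture of conditionals on A = {n ≤ t} and B = {n = t+1}
    push_neg at hcase
    have hb12 : 1/2 ≤ b := by
      rcases eq_or_lt_of_le htℓ with heq | hlt'
      · exfalso
        have hLt : L = (t:ℝ) := by rw [hLdef, heq]
        have hsL : s = (t:ℝ) := le_antisymm (by rw [← hLt]; exact hs) hts
        rw [hsL] at h1
        have h1' : 1 ≤ ((t:ℝ)+1)*a := by nlinarith [h1]
        rw [hLt] at hcase hL1
        have key := mul_le_mul_of_nonneg_left h1' (show (0:ℝ) ≤ 2*(t:ℝ) by linarith)
        nlinarith [key, hcase, hL1]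
      · have htL1 : (t:ℝ) + 1 ≤ L := by
          have h' : t + 1 ≤ ℓ₁ := hlt'
          rw [hLdef]; exact_mod_cast h'
        have hx : ((t:ℝ)+2)*a ≤ (L+1)*a := mul_le_mul_of_nonneg_right (by linarith) ha0
        have hy : (L+1)*a < 1/2 := by
          nlinarith [hcase, hL1, mul_nonneg (mul_nonneg
            (show (0:ℝ) ≤ 2*L - 2 by linarith) (show (0:ℝ) ≤ L+1 by linarith)) ha0]
        have hdd : d = 1 - a - b := by linarith
        rw [hdd] at hkey
        linarith [hkey, hx, hy, hslt]
    have hb0' : 0 < b := by linarith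
    have ha0' : 0 < a := by
      have hq1 : ((t:ℝ)+1)*(1-a) < ((t:ℝ)+1)*1 := by rw [mul_one]; linarith
      have := (mul_lt_mul_iff_right₀ (show (0:ℝ) < (t:ℝ)+1 by linarith)).mp hq1
      linarith
    have hsuma : (t:ℝ) + 1 - s ≤ ((t:ℝ)+1) * a := by linarith [h1]
    set c₁ : ℝ := ((t:ℝ) + 1 - s)/a with hc₁def
    set c₂ : ℝ := (s - (t:ℝ))/b with hc₂def
    have hc₁0 : 0 ≤ c₁ := div_nonneg (by linarith) ha0'.le
    have hc₂0 : 0 ≤ c₂ := div_nonneg (by linarith) hb0'.le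
    have hc₁a : c₁ * a = (t:ℝ)+1-s := div_mul_cancel₀ _ (ne_of_gt ha0')
    have hc₂b : c₂ * b = s - (t:ℝ) := div_mul_cancel₀ _ (ne_of_gt hb0')
    have hc₁t : c₁ ≤ (t:ℝ)+1 := by
      rw [hc₁def, div_le_iff₀ ha0']
      linarith [hsuma]
    have hc₂2 : c₂ ≤ 2 := by
      rw [hc₂def, div_le_iff₀ hb0']
      linarith
    have hCge : (t:ℝ)+1 ≤ 2*L*(L+1) := by nlinarith [hL1, htL, mul_self_nonneg L]
    have h2C : (2:ℝ) ≤ 2*L*(L+1) := by nlinarith [hL1]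
    refine ⟨fun ω => if p ω then c₁ * ψ ω else if q ω then c₂ * ψ ω else 0, ?_, ?_, ?_, ?_, ?_⟩
    · intro ω
      dsimp only
      by_cases h1' : p ω
      · rw [if_pos h1']; exact mul_nonneg hc₁0 (hψ ω)
      · rw [if_neg h1']
        by_cases h2' : q ω
        · rw [if_pos h2']; exact mul_nonneg hc₂0 (hψ ω)
        · rw [if_neg h2']
    · dsimp only
      have hpt : ∀ ω, (if p ω then c₁ * ψ ω else if q ω then c₂ * ψ ω else 0)
          = (if p ω then c₁ * ψ ω else 0) + (if ¬ p ω ∧ q ω then c₂ * ψ ω else 0) := by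
        intro ω
        by_cases h1' : p ω
        · rw [if_pos h1', if_pos h1', if_neg (fun h => h.1 h1')]; ring
        · by_cases h2' : q ω
          · rw [if_neg h1', if_pos h2', if_neg h1', if_pos ⟨h1', h2'⟩]; ring
          · rw [if_neg h1', if_neg h2', if_neg h1', if_neg (fun h => h2' h.2)]; ring
      calc ∑ ω, (if p ω then c₁ * ψ ω else if q ω then c₂ * ψ ω else 0)
          = ∑ ω, ((if p ω then c₁ * ψ ω else 0) + (if ¬ p ω ∧ q ω then c₂ * ψ ω else 0)) :=
            Finset.sum_congr rfl fun ω _ => hpt ω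
        _ = c₁ * a + c₂ * b := by
            rw [Finset.sum_add_distrib, ← sum_filter, ← sum_filter, ← Finset.mul_sum,
              ← Finset.mul_sum, ← ha, ← hb]
        _ = 1 := by rw [hc₁a, hc₂b]; ring
    · intro ω
      dsimp only
      rw [hCcast]
      by_cases h1' : p ω
      · rw [if_pos h1']
        exact mul_le_mul_of_nonneg_right (le_trans hc₁t hCge) (hψ ω)
      · rw [if_neg h1']
        by_cases h2' : q ω
        · rw [if_pos h2']
          exact mul_le_mul_of_nonneg_right (le_trans hc₂2 h2C) (hψ ω)
        · rw [if_neg h2']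
          exact mul_nonneg (by nlinarith [hL1]) (hψ ω)
    · intro ω hpos
      dsimp only at hpos
      by_cases h1' : p ω
      · exact le_trans h1' htceil
      · rw [if_neg h1'] at hpos
        by_cases h2' : q ω
        · rw [if_pos h2'] at hpos
          have hst' : (t:ℝ) < s := by
            rcases lt_or_eq_of_le hts with h | h
            · exact h
            · exfalso
              have hc0 : c₂ = 0 := by rw [hc₂def, ← h]; simp
              rw [hc0, zero_mul] at hpos
              exact absurd hpos (lt_irrefl 0)
          have hlt2 : t < ⌈s⌉ := Int.lt_ceil.mpr hst'
          rw [h2']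
          omega
        · rw [if_neg h2'] at hpos
          exact absurd hpos (lt_irrefl 0)
    · dsimp only
      have hpt : ∀ ω, (if p ω then c₁ * ψ ω else if q ω then c₂ * ψ ω else 0)
            * max (n ω:ℝ) ((t:ℝ))
          = (if p ω then (c₁ * (t:ℝ)) * ψ ω else 0)
            + (if ¬ p ω ∧ q ω then (c₂ * ((t:ℝ)+1)) * ψ ω else 0) := by
        intro ω
        by_cases h1' : p ω
        · have hn : (n ω : ℝ) ≤ (t:ℝ) := by exact_mod_cast h1'
          rw [if_pos h1', if_pos h1', if_neg (fun h => h.1 h1'), max_eq_right hn]; ring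
        · by_cases h2' : q ω
          · have hn : (n ω : ℝ) = (t:ℝ) + 1 := by exact_mod_cast h2'
            have hm : max (n ω:ℝ) ((t:ℝ)) = (t:ℝ) + 1 := by
              rw [hn]; exact max_eq_left (by linarith)
            rw [if_neg h1', if_pos h2', if_neg h1', if_pos ⟨h1', h2'⟩, hm]; ring
          · rw [if_neg h1', if_neg h2', if_neg h1', if_neg (fun h => h2' h.2), zero_mul,
              zero_add]
      calc ∑ ω, (if p ω then c₁ * ψ ω else if q ω then c₂ * ψ ω else 0)
            * max (n ω:ℝ) ((t:ℝ))
          = ∑ ω, ((if p ω then (c₁ * (t:ℝ)) * ψ ω else 0)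
              + (if ¬ p ω ∧ q ω then (c₂ * ((t:ℝ)+1)) * ψ ω else 0)) :=
            Finset.sum_congr rfl fun ω _ => hpt ω
        _ = (c₁ * (t:ℝ)) * a + (c₂ * ((t:ℝ)+1)) * b := by
            rw [Finset.sum_add_distrib, ← sum_filter, ← sum_filter, ← Finset.mul_sum,
              ← Finset.mul_sum, ← ha, ← hb]
        _ = s := by linear_combination (t:ℝ) * hc₁a + ((t:ℝ)+1) * hc₂b
        _ ≤ s := le_rfl
end

section
/- Let B be a finite set, let u, c : B → ℝ, and let λ : B → ℝ satisfy 0 ≤ λ_i ≤ 1 for every i ∈ B. Then there exists λ' : B → ℝ with 0 ≤ λ'_i ≤ 1 for every i such that: (i) Σ_{i∈B} λ'_i = Σ_{i∈B} λ_i; (ii) Σ_{i∈B} u_i·λ'_i = Σ_{i∈B} u_i·λ_i; (iii) Σ_{i∈B} c_i·λ'_i ≤ Σ_{i∈B} c_i·λ_i; (iv) at most two indices i ∈ B have λ'_i ∉ {0,1}; and (v) |{i ∈ B : λ'_i > 0}| ≤ ⌈Σ_{i∈B} λ_i⌉ + 1. -/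
open Finset

private lemma stmt10_step {B : Type*} [Fintype B] [DecidableEq B]
    (u c lam : B → ℝ) (h : ∀ i, 0 ≤ lam i ∧ lam i ≤ 1)
    (h3 : 3 ≤ (univ.filter (fun i => lam i ≠ 0 ∧ lam i ≠ 1)).card) :
    ∃ lam' : B → ℝ, (∀ i, 0 ≤ lam' i ∧ lam' i ≤ 1) ∧
      (∑ i, lam' i = ∑ i, lam i) ∧
      (∑ i, u i * lam' i = ∑ i, u i * lam i) ∧
      (∑ i, c i * lam' i ≤ ∑ i, c i * lam i) ∧
      (univ.filter (fun i => lam' i ≠ 0 ∧ lam' i ≠ 1)).card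
        < (univ.filter (fun i => lam i ≠ 0 ∧ lam i ≠ 1)).card := by
  classical
  set S := univ.filter (fun i => lam i ≠ 0 ∧ lam i ≠ 1) with hS
  -- pick three distinct fractional indices
  obtain ⟨i, hi⟩ := Finset.card_pos.mp (by omega : 0 < S.card)
  have h2 : 0 < (S.erase i).card := by
    have := Finset.card_erase_of_mem hi; omega
  obtain ⟨j, hj⟩ := Finset.card_pos.mp h2
  have h1 : 0 < ((S.erase i).erase j).card := by
    have := Finset.card_erase_of_mem hj
    have := Finset.card_erase_of_mem hi; omega
  obtain ⟨k, hk⟩ := Finset.card_pos.mp h1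
  have hji : j ≠ i := (Finset.mem_erase.mp hj).1
  have hkj : k ≠ j := (Finset.mem_erase.mp hk).1
  have hki : k ≠ i := (Finset.mem_erase.mp (Finset.mem_erase.mp hk).2).1
  have hjS : j ∈ S := (Finset.mem_erase.mp hj).2
  have hkS : k ∈ S := (Finset.mem_erase.mp (Finset.mem_erase.mp hk).2).2
  -- find a direction (a,b,d) with sum 0, u-sum 0, nontrivial
  have hdir : ∃ a b d : ℝ, a + b + d = 0 ∧ u i * a + u j * b + u k * d = 0 ∧
      ¬(a = 0 ∧ b = 0 ∧ d = 0) := by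
    by_cases huij : u i = u j
    · exact ⟨1, -1, 0, by ring, by rw [huij]; ring, by simp⟩
    · refine ⟨u j - u k, u k - u i, u i - u j, by ring, by ring, ?_⟩
      rintro ⟨-, -, hd⟩
      exact huij (by linarith [sub_eq_zero.mp hd])
  obtain ⟨a, b, d, hsum0, husum0, hnz⟩ := hdir
  -- ensure c-direction is nonpositive
  have hdir2 : ∃ a b d : ℝ, a + b + d = 0 ∧ u i * a + u j * b + u k * d = 0 ∧
      c i * a + c j * b + c k * d ≤ 0 ∧ ¬(a = 0 ∧ b = 0 ∧ d = 0) := by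
    rcases le_or_gt (c i * a + c j * b + c k * d) 0 with hc | hc
    · exact ⟨a, b, d, hsum0, husum0, hc, hnz⟩
    · refine ⟨-a, -b, -d, by linarith, by linarith, by linarith, ?_⟩
      rintro ⟨ha, hb, hd⟩
      exact hnz ⟨by linarith, by linarith, by linarith⟩
  clear hsum0 husum0 hnz
  obtain ⟨a, b, d, hsum0, husum0, hcle, hnz⟩ := hdir2
  set v : B → ℝ := Pi.single i a + Pi.single j b + Pi.single k d with hv
  have hvi : v i = a := by simp [hv, Pi.single_apply, hji.symm, hki.symm, hji, hki]
  have hvj : v j = b := by simp [hv, Pi.single_apply, hji, hkj]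
  have hvk : v k = d := by simp [hv, Pi.single_apply, hki, hkj]
  have hvsupp : ∀ m, v m ≠ 0 → m = i ∨ m = j ∨ m = k := by
    intro m hm
    by_contra hmm
    push_neg at hmm
    simp [hv, Pi.single_apply, hmm.1, hmm.2.1, hmm.2.2] at hm
  have hvfrac : ∀ m, v m ≠ 0 → lam m ≠ 0 ∧ lam m ≠ 1 := by
    intro m hm
    rcases hvsupp m hm with rfl | rfl | rfl
    · exact (Finset.mem_filter.mp hi).2
    · exact (Finset.mem_filter.mp hjS).2
    · exact (Finset.mem_filter.mp hkS).2
  -- the sums of v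
  have hsv : ∑ m, v m = a + b + d := by
    simp [hv, Pi.single_apply, Finset.sum_add_distrib, Finset.sum_ite_eq']
  have husv : ∑ m, u m * v m = u i * a + u j * b + u k * d := by
    simp [hv, Pi.single_apply, mul_add, Finset.sum_add_distrib, mul_ite,
      Finset.sum_ite_eq']
  have hcsv : ∑ m, c m * v m = c i * a + c j * b + c k * d := by
    simp [hv, Pi.single_apply, mul_add, Finset.sum_add_distrib, mul_ite,
      Finset.sum_ite_eq']
  -- the step length
  set F := univ.filter (fun m => v m ≠ 0) with hF
  have hFne : F.Nonempty := by
    rcases not_and_or.mp hnz with ha | h'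
    · exact ⟨i, Finset.mem_filter.mpr ⟨Finset.mem_univ _, hvi ▸ ha⟩⟩
    rcases not_and_or.mp h' with hb | hd
    · exact ⟨j, Finset.mem_filter.mpr ⟨Finset.mem_univ _, hvj ▸ hb⟩⟩
    · exact ⟨k, Finset.mem_filter.mpr ⟨Finset.mem_univ _, hvk ▸ hd⟩⟩
  set f : B → ℝ := fun m => if 0 < v m then (1 - lam m) / v m else lam m / (-v m)
    with hf
  set t := F.inf' hFne f with htdef
  have ht0 : 0 ≤ t := by
    apply Finset.le_inf'
    intro m hm
    have hm' : v m ≠ 0 := (Finset.mem_filter.mp hm).2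
    by_cases hp : 0 < v m
    · simp only [hf, if_pos hp]
      exact div_nonneg (by linarith [(h m).2]) hp.le
    · simp only [hf, if_neg hp]
      exact div_nonneg (h m).1 (by rcases hm'.lt_or_gt with h' | h' <;> [linarith; exact absurd h' hp])
  have htle : ∀ m, v m ≠ 0 → t ≤ f m := fun m hm =>
    Finset.inf'_le f (Finset.mem_filter.mpr ⟨Finset.mem_univ _, hm⟩)
  set lam' : B → ℝ := fun m => lam m + t * v m with hlam'
  have hbounds : ∀ m, 0 ≤ lam' m ∧ lam' m ≤ 1 := by
    intro m
    by_cases hm : v m = 0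
    · simp [hlam', hm]; exact h m
    rcases lt_or_gt_of_ne hm with hneg | hpos
    · have := htle m hm
      rw [hf] at this
      simp only [if_neg (not_lt.mpr hneg.le)] at this
      have h2 : t * (-v m) ≤ lam m := by
        calc t * (-v m) ≤ (lam m / (-v m)) * (-v m) := by
              apply mul_le_mul_of_nonneg_right this (by linarith)
          _ = lam m := div_mul_cancel₀ _ (by linarith)
      constructor
      · simp only [hlam']; nlinarith
      · have : t * v m ≤ 0 := mul_nonpos_of_nonneg_of_nonpos ht0 hneg.le
        simp only [hlam']; linarith [(h m).2]
    · have := htle m hm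
      rw [hf] at this
      simp only [if_pos hpos] at this
      have h2 : t * v m ≤ 1 - lam m := by
        calc t * v m ≤ ((1 - lam m) / v m) * v m :=
              mul_le_mul_of_nonneg_right this hpos.le
          _ = 1 - lam m := div_mul_cancel₀ _ hpos.ne'
      constructor
      · have : 0 ≤ t * v m := mul_nonneg ht0 hpos.le
        simp only [hlam']; linarith [(h m).1]
      · simp only [hlam']; linarith
  -- some coordinate hits the boundary
  obtain ⟨m₀, hm₀F, hm₀⟩ := Finset.exists_mem_eq_inf' hFne f
  have hm₀v : v m₀ ≠ 0 := (Finset.mem_filter.mp hm₀F).2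
  have hm₀hit : lam' m₀ = 0 ∨ lam' m₀ = 1 := by
    rcases hm₀v.lt_or_gt with hneg | hpos
    · left
      rw [← htdef, hf] at hm₀
      simp only [if_neg (not_lt.mpr hneg.le)] at hm₀
      have h4 : t * -v m₀ = lam m₀ := by
        rw [hm₀]; exact div_mul_cancel₀ _ (neg_ne_zero.mpr hm₀v)
      show lam m₀ + t * v m₀ = 0
      linear_combination -h4
    · right
      rw [← htdef, hf] at hm₀
      simp only [if_pos hpos] at hm₀
      have h4 : t * v m₀ = 1 - lam m₀ := by
        rw [hm₀]; exact div_mul_cancel₀ _ hpos.ne'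
      show lam m₀ + t * v m₀ = 1
      linear_combination h4
  refine ⟨lam', hbounds, ?_, ?_, ?_, ?_⟩
  · simp only [hlam']
    rw [Finset.sum_add_distrib, ← Finset.mul_sum, hsv, hsum0]
    ring
  · simp only [hlam']
    have : ∀ m, u m * (lam m + t * v m) = u m * lam m + t * (u m * v m) := by
      intro m; ring
    simp only [this]
    rw [Finset.sum_add_distrib, ← Finset.mul_sum, husv, husum0]
    ring
  · simp only [hlam']
    have : ∀ m, c m * (lam m + t * v m) = c m * lam m + t * (c m * v m) := by
      intro m; ring
    simp only [this]
    rw [Finset.sum_add_distrib, ← Finset.mul_sum, hcsv]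
    nlinarith [mul_nonpos_of_nonneg_of_nonpos ht0 hcle]
  · apply Finset.card_lt_card
    constructor
    · intro m hm
      rw [Finset.mem_filter] at hm ⊢
      refine ⟨hm.1, ?_⟩
      by_cases hvm : v m = 0
      · simpa [hlam', hvm] using hm.2
      · exact hvfrac m hvm
    · intro hsub
      have hm₀S' : m₀ ∉ univ.filter (fun m => lam' m ≠ 0 ∧ lam' m ≠ 1) := by
        simp only [Finset.mem_filter, not_and]
        intro _ hne
        rcases hm₀hit with h0 | h1
        · intro _; exact hne h0
        · intro hx; exact hx h1
      have hm₀S : m₀ ∈ S := by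
        rw [hS, Finset.mem_filter]
        exact ⟨Finset.mem_univ _, hvfrac m₀ hm₀v⟩
      exact hm₀S' (hsub hm₀S)

private lemma stmt10_key {B : Type*} [Fintype B] [DecidableEq B] :
    ∀ (n : ℕ) (lam u c : B → ℝ),
      (∀ i, 0 ≤ lam i ∧ lam i ≤ 1) →
      (univ.filter (fun i => lam i ≠ 0 ∧ lam i ≠ 1)).card ≤ n →
      ∃ lam' : B → ℝ, (∀ i, 0 ≤ lam' i ∧ lam' i ≤ 1) ∧
        (∑ i, lam' i = ∑ i, lam i) ∧
        (∑ i, u i * lam' i = ∑ i, u i * lam i) ∧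
        (∑ i, c i * lam' i ≤ ∑ i, c i * lam i) ∧
        (univ.filter (fun i => lam' i ≠ 0 ∧ lam' i ≠ 1)).card ≤ 2 := by
  intro n
  induction n with
  | zero => intro lam u c h hc; exact ⟨lam, h, rfl, rfl, le_refl _, by omega⟩
  | succ n ih =>
    intro lam u c h hc
    by_cases h2 : (univ.filter (fun i => lam i ≠ 0 ∧ lam i ≠ 1)).card ≤ 2
    · exact ⟨lam, h, rfl, rfl, le_refl _, h2⟩
    · obtain ⟨lam₁, h1, hs1, hu1, hc1, hlt⟩ := stmt10_step u c lam h (by omega)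
      obtain ⟨lam', h', hs', hu', hc', h2'⟩ := ih lam₁ u c h1 (by omega)
      exact ⟨lam', h', by rw [hs', hs1], by rw [hu', hu1], le_trans hc' hc1, h2'⟩

/-- The key structural step of Lemma 4.7: a vertex of the polytope
`{λ' ∈ [0,1]^B : Σλ'ᵢ and Σuᵢλ'ᵢ fixed}` minimizing a linear objective has at
most two fractional coordinates, hence support of size at most `⌈Σλ⌉ + 1`. -/
theorem stmt_10 {B : Type*} [Fintype B] (u c lam : B → ℝ)
    (hlam : ∀ i, 0 ≤ lam i ∧ lam i ≤ 1) :
    ∃ lam' : B → ℝ, (∀ i, 0 ≤ lam' i ∧ lam' i ≤ 1) ∧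
      (∑ i, lam' i = ∑ i, lam i) ∧
      (∑ i, u i * lam' i = ∑ i, u i * lam i) ∧
      (∑ i, c i * lam' i ≤ ∑ i, c i * lam i) ∧
      {i | lam' i ≠ 0 ∧ lam' i ≠ 1}.ncard ≤ 2 ∧
      ({i | 0 < lam' i}.ncard : ℤ) ≤ ⌈∑ i, lam i⌉ + 1 := by
  classical
  obtain ⟨lam', h', hs', hu', hc', hfrac⟩ :=
    stmt10_key (univ.filter (fun i => lam i ≠ 0 ∧ lam i ≠ 1)).card lam u c hlam
      (le_refl _)
  refine ⟨lam', h', hs', hu', hc', ?_, ?_⟩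
  · rw [Set.ncard_eq_toFinset_card', Set.toFinset_setOf]
    exact hfrac
  · -- support bound
    rw [Set.ncard_eq_toFinset_card', Set.toFinset_setOf]
    set P := univ.filter (fun i => 0 < lam' i) with hP
    set A1 := univ.filter (fun i => lam' i = 1) with hA1
    set Af := univ.filter (fun i => 0 < lam' i ∧ lam' i ≠ 1) with hAf
    have e1 : P.filter (fun i => lam' i = 1) = A1 := by
      ext x
      simp only [hP, hA1, Finset.mem_filter, Finset.mem_univ, true_and]
      constructor
      · rintro ⟨_, h2⟩; exact h2
      · intro h2; exact ⟨by rw [h2]; norm_num, h2⟩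
    have e2 : P.filter (fun i => ¬ lam' i = 1) = Af := by
      ext x
      simp only [hP, hAf, Finset.mem_filter, Finset.mem_univ, true_and]
    have hsplit : P.card = A1.card + Af.card := by
      rw [← Finset.card_filter_add_card_filter_not
        (s := P) (p := fun i => lam' i = 1), e1, e2]
    have hAf2 : Af.card ≤ 2 := by
      refine le_trans (Finset.card_le_card ?_) hfrac
      intro x hx
      rw [hAf, Finset.mem_filter] at hx
      exact Finset.mem_filter.mpr ⟨hx.1, ne_of_gt hx.2.1, hx.2.2⟩
    have hsum : ∑ i, lam i = (A1.card : ℝ) + ∑ i ∈ Af, lam' i := by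
      rw [← hs']
      rw [← Finset.sum_filter_add_sum_filter_not univ (fun i => 0 < lam' i) lam']
      have hz : ∑ i ∈ univ.filter (fun i => ¬ 0 < lam' i), lam' i = 0 := by
        apply Finset.sum_eq_zero
        intro x hx
        rw [Finset.mem_filter] at hx
        linarith [(h' x).1, hx.2]
      rw [hz, add_zero, ← hP]
      have hPsplit : ∑ i ∈ P, lam' i
          = ∑ i ∈ P.filter (fun i => lam' i = 1), lam' i
            + ∑ i ∈ P.filter (fun i => ¬ lam' i = 1), lam' i :=
        (Finset.sum_filter_add_sum_filter_not P _ lam').symm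
      rw [hPsplit]
      congr 1
      · rw [e1, Finset.sum_congr rfl
          (fun x hx => (Finset.mem_filter.mp ((hA1 ▸ hx) : x ∈ univ.filter (fun i => lam' i = 1))).2)]
        simp
      · rw [e2]
    rw [hsplit]
    rcases Finset.eq_empty_or_nonempty Af with hAfe | hAfne
    · rw [hAfe] at hsum ⊢
      simp only [Finset.sum_empty, add_zero] at hsum
      rw [Finset.card_empty]
      rw [hsum]
      push_cast
      rw [Int.ceil_natCast]
      omega
    · have hspos : 0 < ∑ i ∈ Af, lam' i := by
        apply Finset.sum_pos _ hAfne
        intro x hx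
        exact ((Finset.mem_filter.mp hx).2).1
      have hlt : (A1.card : ℤ) < ⌈∑ i, lam i⌉ := by
        rw [Int.lt_ceil]
        push_cast
        linarith [hsum]
      push_cast
      omega
end

section
/- Let (X,d) be a metric space; let F ⊆ X and C ⊆ X be finite sets; let x : F × C → ℝ be nonnegative with Σ_{i∈F} x_{i,j} = 1 for every j ∈ C; set d_av(j) := Σ_{i∈F} x_{i,j}·d(i,j) and D_i := Σ_{j∈C} x_{i,j}·(d(i,j) + d_av(j)). Let 𝒥' be a finite collection of pairwise disjoint nonempty finite subsets of X (the non-concentrated components), let V := ⋃_{J∈𝒥'} J, for each v ∈ V let U_v ⊆ F, with the sets {U_v}_{v∈V} pairwise disjoint, and let B := ⋃_{v∈V} U_v and D_B := Σ_{i∈B} D_i. Write x_{i,C} := Σ_{j∈C} x_{i,j}, α_v := Σ_{i∈U_v} x_{i,C}, x_{U(J),C} := Σ_{v∈J} α_v, x_{U(J),j} := Σ_{v∈J} Σ_{i∈U_v} x_{i,j}, and π_J := Σ_{j∈C} x_{U(J),j}·(1 − x_{U(J),j}). Let y : B → ℝ with 0 < y_i ≤ 1, let u : B → ℝ be nonnegative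 with x_{i,C} ≤ u_i·y_i for all i ∈ B, let L : 𝒥' → ℝ be nonnegative, and let c ≥ 0 and ℓ₂ ≥ 0 be reals. Assume: (H1) d(i,v) ≤ d(i,j) + 4·d_av(j) for every J ∈ 𝒥', v ∈ J, i ∈ U_v, j ∈ C; (H2) x_{U(J),C} ≤ ℓ₂·π_J for every J ∈ 𝒥'; (H3) L(J)·π_J ≤ 10·Σ_{v∈J} Σ_{i∈U_v} D_i for every J ∈ 𝒥'; (H4) there exists v* ∈ X with d(v,v*) ≤ c·L(J) for every J ∈ 𝒥' and v ∈ J. Then there exist S ⊆ B and β : B → ℝ nonnegative such that: (i) ⌈Σ_{i∈B} y_i⌉ ≤ |S| ≤ ⌈Σ_{i∈B} y_i⌉ + 1; (ii) β_i ≤ u_i for i ∈ S and β_i = 0 for i ∈ B∖S; (iii) Σ_{i∈B} β_i = Σ_{v∈V} α_v; and (iv) there exists f : V × B → ℝ nonnegative with Σ_{i∈B} f(v,i) = α_v for every v ∈ V, Σ_{v∈V} f(v,i) ≤ β_i for every i ∈ B, and Σ_{v∈V, i∈B} f(v,i)·d(v,i) ≤ (4 + 20·c·ℓ₂)·D_B.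 -/
lemma lemA {X : Type*} [DecidableEq X] (B : Finset X) (u g : X → ℝ) :
    ∀ (n : ℕ) (x : X → ℝ),
      (B.filter fun i => 0 < x i ∧ x i < u i).card ≤ n →
      (∀ i ∈ B, 0 ≤ x i ∧ x i ≤ u i) →
      ∃ β : X → ℝ, (∀ i ∈ B, 0 ≤ β i ∧ β i ≤ u i) ∧
        ∑ i ∈ B, β i = ∑ i ∈ B, x i ∧
        ∑ i ∈ B, β i * g i ≤ ∑ i ∈ B, x i * g i ∧
        ∑ i ∈ B, β i * (u i)⁻¹ ≤ ∑ i ∈ B, x i * (u i)⁻¹ ∧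
        (B.filter fun i => 0 < β i ∧ β i < u i).card ≤ 2 := by
  intro n
  induction n with
  | zero =>
    intro x hcard hx
    exact ⟨x, hx, rfl, le_rfl, le_rfl, by omega⟩
  | succ n ih =>
    intro x hcard hx
    by_cases hsmall : (B.filter fun i => 0 < x i ∧ x i < u i).card ≤ 2
    · exact ⟨x, hx, rfl, le_rfl, le_rfl, hsmall⟩
    push_neg at hsmall
    obtain ⟨a, ha, b, hb, c, hc, hab, hac, hbc⟩ := Finset.two_lt_card.mp hsmall
    obtain ⟨haB, hafr⟩ := Finset.mem_filter.mp ha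
    obtain ⟨hbB, hbfr⟩ := Finset.mem_filter.mp hb
    obtain ⟨hcB, hcfr⟩ := Finset.mem_filter.mp hc
    have hua : 0 < u a := lt_trans hafr.1 hafr.2
    have hub : 0 < u b := lt_trans hbfr.1 hbfr.2
    have huc : 0 < u c := lt_trans hcfr.1 hcfr.2
    -- direction
    have hdir : ∃ d : X → ℝ, (∀ i, i ≠ a → i ≠ b → i ≠ c → d i = 0) ∧
        d a + d b + d c = 0 ∧
        d a * (u a)⁻¹ + d b * (u b)⁻¹ + d c * (u c)⁻¹ = 0 ∧
        (d a ≠ 0 ∨ d b ≠ 0 ∨ d c ≠ 0) ∧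
        d a * g a + d b * g b + d c * g c ≤ 0 := by
      have base : ∃ d : X → ℝ, (∀ i, i ≠ a → i ≠ b → i ≠ c → d i = 0) ∧
          d a + d b + d c = 0 ∧
          d a * (u a)⁻¹ + d b * (u b)⁻¹ + d c * (u c)⁻¹ = 0 ∧
          (d a ≠ 0 ∨ d b ≠ 0 ∨ d c ≠ 0) := by
        by_cases hab' : u a = u b
        · set d : X → ℝ := fun i => if i = a then 1 else if i = b then -1 else 0 with hd
          have hda : d a = 1 := by simp [hd]
          have hdb : d b = -1 := by simp [hd, Ne.symm hab]
          have hdc : d c = 0 := by simp [hd, Ne.symm hac, Ne.symm hbc]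
          refine ⟨d, ?_, ?_, ?_, ?_⟩
          · intro i h1 h2 _; simp [hd, h1, h2]
          · rw [hda, hdb, hdc]; ring
          · rw [hda, hdb, hdc, hab']; ring
          · left; rw [hda]; norm_num
        · set d : X → ℝ := fun i => if i = a then u a * (u b - u c)
            else if i = b then u b * (u c - u a) else if i = c then u c * (u a - u b) else 0 with hd
          have hda : d a = u a * (u b - u c) := by simp [hd]
          have hdb : d b = u b * (u c - u a) := by simp [hd, Ne.symm hab]
          have hdc : d c = u c * (u a - u b) := by simp [hd, Ne.symm hac, Ne.symm hbc]
          refine ⟨d, ?_, ?_, ?_, ?_⟩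
          · intro i h1 h2 h3; simp [hd, h1, h2, h3]
          · rw [hda, hdb, hdc]; ring
          · rw [hda, hdb, hdc]; field_simp; try ring
          · right; right; rw [hdc]
            exact mul_ne_zero (ne_of_gt huc) (sub_ne_zero.mpr hab')
      obtain ⟨d, h0, h1, h2, h3⟩ := base
      rcases le_or_gt (d a * g a + d b * g b + d c * g c) 0 with h | h
      · exact ⟨d, h0, h1, h2, h3, h⟩
      · refine ⟨fun i => -d i, fun i ha' hb' hc' => by simp [h0 i ha' hb' hc'],
          by show -d a + -d b + -d c = 0; linarith,
          by show -d a * (u a)⁻¹ + -d b * (u b)⁻¹ + -d c * (u c)⁻¹ = 0; linarith, ?_,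
          by show -d a * g a + -d b * g b + -d c * g c ≤ 0; linarith⟩
        rcases h3 with h3 | h3 | h3
        · left; simpa using h3
        · right; left; simpa using h3
        · right; right; simpa using h3
    obtain ⟨d, hd0, hdsum, hdinv, hdne, hdslope⟩ := hdir
    set T : Finset X := {a, b, c} with hT
    have hTB : T ⊆ B := by
      intro i hi
      rcases Finset.mem_insert.mp hi with h | hi
      · exact h ▸ haB
      rcases Finset.mem_insert.mp hi with h | hi
      · exact h ▸ hbB
      · exact (Finset.mem_singleton.mp hi) ▸ hcB
    have hfrac : ∀ j ∈ T, 0 < x j ∧ x j < u j := by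
      intro j hj
      rcases Finset.mem_insert.mp hj with h | hj
      · exact h ▸ hafr
      rcases Finset.mem_insert.mp hj with h | hj
      · exact h ▸ hbfr
      · exact (Finset.mem_singleton.mp hj) ▸ hcfr
    have hd_out : ∀ i, i ∉ T → d i = 0 := by
      intro i hi
      simp only [hT, Finset.mem_insert, Finset.mem_singleton, not_or] at hi
      exact hd0 i hi.1 hi.2.1 hi.2.2
    set τ : X → ℝ := fun j => if 0 < d j then (u j - x j) / d j else x j / (-d j) with hτ
    have hτpos : ∀ j ∈ T, d j ≠ 0 → 0 < τ j := by
      intro j hj hdj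
      obtain ⟨h1, h2⟩ := hfrac j hj
      rcases lt_or_gt_of_ne hdj with hneg | hpos
      · rw [hτ]; simp only [if_neg (not_lt.mpr (le_of_lt hneg))]
        exact div_pos h1 (by linarith)
      · rw [hτ]; simp only [if_pos hpos]
        exact div_pos (by linarith) hpos
    set act : Finset X := T.filter fun j => d j ≠ 0 with hact
    have hactne : act.Nonempty := by
      rcases hdne with h | h | h
      · exact ⟨a, Finset.mem_filter.mpr ⟨by simp [hT], h⟩⟩
      · exact ⟨b, Finset.mem_filter.mpr ⟨by simp [hT], h⟩⟩
      · exact ⟨c, Finset.mem_filter.mpr ⟨by simp [hT], h⟩⟩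
    set t := act.inf' hactne τ with htdef
    obtain ⟨j₀, hj₀act, hj₀eq⟩ := Finset.exists_mem_eq_inf' hactne τ
    have hj₀T : j₀ ∈ T := (Finset.mem_filter.mp hj₀act).1
    have hdj₀ : d j₀ ≠ 0 := (Finset.mem_filter.mp hj₀act).2
    have htpos : 0 < t := by rw [htdef, hj₀eq]; exact hτpos j₀ hj₀T hdj₀
    have htle : ∀ j ∈ act, t ≤ τ j := fun j hj => Finset.inf'_le τ hj
    set x' : X → ℝ := fun i => x i + t * d i with hx'def
    have hbnd : ∀ i ∈ T, d i ≠ 0 → 0 ≤ x' i ∧ x' i ≤ u i := by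
      intro i hiT hdi
      have hti := htle i (Finset.mem_filter.mpr ⟨hiT, hdi⟩)
      obtain ⟨h1, h2⟩ := hfrac i hiT
      rcases lt_or_gt_of_ne hdi with hneg | hpos
      · have hτi : τ i = x i / (-d i) := by
          rw [hτ]; simp only [if_neg (not_lt.mpr (le_of_lt hneg))]
        rw [hτi] at hti
        have := (le_div_iff₀ (by linarith : (0:ℝ) < -d i)).mp hti
        constructor
        · simp only [hx'def]; nlinarith
        · simp only [hx'def]; nlinarith
      · have hτi : τ i = (u i - x i) / d i := by rw [hτ]; simp only [if_pos hpos]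
        rw [hτi] at hti
        have := (le_div_iff₀ hpos).mp hti
        constructor
        · simp only [hx'def]; nlinarith
        · simp only [hx'def]; nlinarith
    have hx' : ∀ i ∈ B, 0 ≤ x' i ∧ x' i ≤ u i := by
      intro i hiB
      by_cases hiT : i ∈ T
      · by_cases hdi : d i = 0
        · simp only [hx'def, hdi, mul_zero, add_zero]; exact hx i hiB
        · exact hbnd i hiT hdi
      · simp only [hx'def, hd_out i hiT, mul_zero, add_zero]; exact hx i hiB
    have hsumT : ∀ φ : X → ℝ, ∑ i ∈ B, φ i * d i = φ a * d a + φ b * d b + φ c * d c := by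
      intro φ
      rw [← Finset.sum_subset hTB (fun i _ hiT => by rw [hd_out i hiT, mul_zero])]
      rw [hT]
      rw [Finset.sum_insert (by simp [hab, hac]), Finset.sum_insert (by simp [hbc]),
        Finset.sum_singleton]
      ring
    have hEq1 : ∑ i ∈ B, x' i = ∑ i ∈ B, x i := by
      simp only [hx'def]
      rw [Finset.sum_add_distrib]
      have : ∑ i ∈ B, t * d i = t * ∑ i ∈ B, (fun _ => (1:ℝ)) i * d i := by
        rw [Finset.mul_sum]; exact Finset.sum_congr rfl fun i _ => by ring
      rw [this, hsumT]
      simp only [one_mul]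
      rw [hdsum]; ring
    have hEq2 : ∑ i ∈ B, x' i * g i ≤ ∑ i ∈ B, x i * g i := by
      have : ∑ i ∈ B, x' i * g i = ∑ i ∈ B, x i * g i + t * ∑ i ∈ B, g i * d i := by
        rw [Finset.mul_sum, ← Finset.sum_add_distrib]
        exact Finset.sum_congr rfl fun i _ => by simp only [hx'def]; ring
      rw [this, hsumT]
      nlinarith
    have hEq3 : ∑ i ∈ B, x' i * (u i)⁻¹ = ∑ i ∈ B, x i * (u i)⁻¹ := by
      have : ∑ i ∈ B, x' i * (u i)⁻¹ = ∑ i ∈ B, x i * (u i)⁻¹ + t * ∑ i ∈ B, (u i)⁻¹ * d i := by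
        rw [Finset.mul_sum, ← Finset.sum_add_distrib]
        exact Finset.sum_congr rfl fun i _ => by simp only [hx'def]; ring
      rw [this, hsumT]
      have : (u a)⁻¹ * d a + (u b)⁻¹ * d b + (u c)⁻¹ * d c = 0 := by
        rw [← hdinv]; ring
      rw [this]; ring
    -- the pivot leaves the fractional set
    have hj₀out : ¬ (0 < x' j₀ ∧ x' j₀ < u j₀) := by
      rcases lt_or_gt_of_ne hdj₀ with hneg | hpos
      · have hτi : τ j₀ = x j₀ / (-d j₀) := by
          rw [hτ]; simp only [if_neg (not_lt.mpr (le_of_lt hneg))]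
        have hz : x' j₀ = 0 := by
          show x j₀ + t * d j₀ = 0
          rw [htdef, hj₀eq, hτi]
          field_simp [hdj₀]
          try ring
        rw [hz]; simp
      · have hτi : τ j₀ = (u j₀ - x j₀) / d j₀ := by rw [hτ]; simp only [if_pos hpos]
        have hz : x' j₀ = u j₀ := by
          show x j₀ + t * d j₀ = u j₀
          rw [htdef, hj₀eq, hτi]
          field_simp [hdj₀]
          try ring
        rw [hz]; simp
    have hsub : (B.filter fun i => 0 < x' i ∧ x' i < u i) ⊆
        (B.filter fun i => 0 < x i ∧ x i < u i).erase j₀ := by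
      intro i hi
      obtain ⟨hiB, hifr⟩ := Finset.mem_filter.mp hi
      refine Finset.mem_erase.mpr ⟨?_, ?_⟩
      · rintro rfl; exact hj₀out hifr
      · refine Finset.mem_filter.mpr ⟨hiB, ?_⟩
        by_cases hiT : i ∈ T
        · exact hfrac i hiT
        · simpa [hx'def, hd_out i hiT] using hifr
    have hj₀mem : j₀ ∈ (B.filter fun i => 0 < x i ∧ x i < u i) :=
      Finset.mem_filter.mpr ⟨hTB hj₀T, hfrac j₀ hj₀T⟩
    have hcard' : (B.filter fun i => 0 < x' i ∧ x' i < u i).card ≤ n := by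
      have h1 := Finset.card_le_card hsub
      rw [Finset.card_erase_of_mem hj₀mem] at h1
      omega
    obtain ⟨β, hb1, hb2, hb3, hb4, hb5⟩ := ih x' hcard' hx'
    exact ⟨β, hb1, hb2.trans hEq1, hb3.trans hEq2, le_trans hb4 (le_of_eq hEq3), hb5⟩



/-- Lemma 4.7: an almost-integral local solution `(S, β)` for a union `V` of
non-concentrated black components, whose earth mover distance to the demand
vector (witnessed by the transport plan `f`) is at most `(4 + 20·c·ℓ₂)·D_B`. -/
theorem stmt_11 {X : Type*} [MetricSpace X] [DecidableEq X]
    (F C : Finset X) (x : X → X → ℝ)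
    (hx : ∀ i ∈ F, ∀ j ∈ C, 0 ≤ x i j)
    (hsum : ∀ j ∈ C, ∑ i ∈ F, x i j = 1)
    (𝒥' : Finset (Finset X))
    (hJne : ∀ J ∈ 𝒥', J.Nonempty)
    (hJdisj : ∀ J ∈ 𝒥', ∀ J' ∈ 𝒥', J ≠ J' → Disjoint J J')
    (U : X → Finset X)
    (hUF : ∀ v ∈ 𝒥'.biUnion id, U v ⊆ F)
    (hUdisj : ∀ v ∈ 𝒥'.biUnion id, ∀ v' ∈ 𝒥'.biUnion id, v ≠ v' →
      Disjoint (U v) (U v'))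
    (y u : X → ℝ) (L : Finset X → ℝ) (c ℓ₂ : ℝ)
    (hc : 0 ≤ c) (hℓ₂ : 0 ≤ ℓ₂)
    (hy : ∀ i ∈ (𝒥'.biUnion id).biUnion U, 0 < y i ∧ y i ≤ 1)
    (hu : ∀ i ∈ (𝒥'.biUnion id).biUnion U,
      0 ≤ u i ∧ (∑ j ∈ C, x i j) ≤ u i * y i)
    (hL : ∀ J ∈ 𝒥', 0 ≤ L J)
    -- (H1): Property (d) of Lemma 3.1 for the Voronoi bundles
    (H1 : ∀ J ∈ 𝒥', ∀ v ∈ J, ∀ i ∈ U v, ∀ j ∈ C,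
      dist i v ≤ dist i j + 4 * ∑ i' ∈ F, x i' j * dist i' j)
    -- (H2): each component is non-concentrated
    (H2 : ∀ J ∈ 𝒥',
      (∑ v ∈ J, ∑ i ∈ U v, ∑ j ∈ C, x i j) ≤
        ℓ₂ * ∑ j ∈ C, (∑ v ∈ J, ∑ i ∈ U v, x i j) *
          (1 - ∑ v ∈ J, ∑ i ∈ U v, x i j))
    -- (H3): the conclusion of Lemma 4.2
    (H3 : ∀ J ∈ 𝒥',
      L J * ∑ j ∈ C, (∑ v ∈ J, ∑ i ∈ U v, x i j) *
          (1 - ∑ v ∈ J, ∑ i ∈ U v, x i j) ≤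
        10 * ∑ v ∈ J, ∑ i ∈ U v, ∑ j ∈ C,
          x i j * (dist i j + ∑ i' ∈ F, x i' j * dist i' j))
    -- (H4): the diameter bound
    (H4 : ∃ vstar : X, ∀ J ∈ 𝒥', ∀ v ∈ J, dist v vstar ≤ c * L J) :
    ∃ (S : Finset X) (β : X → ℝ),
      S ⊆ (𝒥'.biUnion id).biUnion U ∧ (∀ i, 0 ≤ β i) ∧
      -- (i)
      (⌈∑ i ∈ (𝒥'.biUnion id).biUnion U, y i⌉ ≤ (S.card : ℤ) ∧
        (S.card : ℤ) ≤ ⌈∑ i ∈ (𝒥'.biUnion id).biUnion U, y i⌉ + 1) ∧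
      -- (ii)
      (∀ i ∈ S, β i ≤ u i) ∧
      (∀ i ∈ (𝒥'.biUnion id).biUnion U, i ∉ S → β i = 0) ∧
      -- (iii)
      (∑ i ∈ (𝒥'.biUnion id).biUnion U, β i =
        ∑ v ∈ 𝒥'.biUnion id, ∑ i ∈ U v, ∑ j ∈ C, x i j) ∧
      -- (iv)
      (∃ f : X → X → ℝ, (∀ v i, 0 ≤ f v i) ∧
        (∀ v ∈ 𝒥'.biUnion id,
          ∑ i ∈ (𝒥'.biUnion id).biUnion U, f v i = ∑ i ∈ U v, ∑ j ∈ C, x i j) ∧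
        (∀ i ∈ (𝒥'.biUnion id).biUnion U, ∑ v ∈ 𝒥'.biUnion id, f v i ≤ β i) ∧
        (∑ v ∈ 𝒥'.biUnion id, ∑ i ∈ (𝒥'.biUnion id).biUnion U, f v i * dist v i ≤
          (4 + 20 * c * ℓ₂) * ∑ i ∈ (𝒥'.biUnion id).biUnion U, ∑ j ∈ C,
            x i j * (dist i j + ∑ i' ∈ F, x i' j * dist i' j))) := by
  classical
  obtain ⟨vstar, hvstar⟩ := H4
  set V : Finset X := 𝒥'.biUnion id with hVdef
  set B : Finset X := V.biUnion U with hBdef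
  set DB : ℝ := ∑ i ∈ B, ∑ j ∈ C, x i j * (dist i j + ∑ i' ∈ F, x i' j * dist i' j) with hDB
  -- owner choice
  have hwex : ∀ i : X, ∃ v : X, i ∈ B → v ∈ V ∧ i ∈ U v := by
    intro i
    by_cases h : i ∈ B
    · obtain ⟨v, hv, hiv⟩ := Finset.mem_biUnion.mp h
      exact ⟨v, fun _ => ⟨hv, hiv⟩⟩
    · exact ⟨i, fun h' => absurd h' h⟩
  choose w hw using hwex
  have hJex : ∀ v : X, ∃ J : Finset X, v ∈ V → J ∈ 𝒥' ∧ v ∈ J := by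
    intro v
    by_cases h : v ∈ V
    · obtain ⟨J, hJ, hvJ⟩ := Finset.mem_biUnion.mp h
      exact ⟨J, fun _ => ⟨hJ, hvJ⟩⟩
    · exact ⟨∅, fun h' => absurd h' h⟩
  choose Jf hJf using hJex
  have hVJ : ∀ {J v}, J ∈ 𝒥' → v ∈ J → v ∈ V := fun hJ hv =>
    Finset.mem_biUnion.mpr ⟨_, hJ, hv⟩
  have hBU : ∀ {v i}, v ∈ V → i ∈ U v → i ∈ B := fun hv hi =>
    Finset.mem_biUnion.mpr ⟨_, hv, hi⟩
  have wuniq : ∀ {v i}, v ∈ V → i ∈ U v → i ∈ B → w i = v := by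
    intro v i hv hiv hiB
    by_contra hne
    exact Finset.disjoint_left.mp (hUdisj _ (hw i hiB).1 _ hv hne) (hw i hiB).2 hiv
  have Juniq : ∀ {J v}, J ∈ 𝒥' → v ∈ J → v ∈ V → Jf v = J := by
    intro J v hJ hvJ hvV
    by_contra hne
    exact Finset.disjoint_left.mp (hJdisj _ (hJf v hvV).1 _ hJ hne) (hJf v hvV).2 hvJ
  have hBF : ∀ i ∈ B, i ∈ F := fun i hi => hUF (w i) (hw i hi).1 (hw i hi).2
  set g : X → ℝ := fun i => dist i (w i) + c * L (Jf (w i)) with hgdef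
  -- sum decompositions
  have hdisjU : (↑V : Set X).PairwiseDisjoint U := fun v hv v' hv' hne =>
    hUdisj v (Finset.mem_coe.mp hv) v' (Finset.mem_coe.mp hv') hne
  have hdisjJ : (↑𝒥' : Set (Finset X)).PairwiseDisjoint (id : Finset X → Finset X) :=
    fun J hJ J' hJ' hne => hJdisj J (Finset.mem_coe.mp hJ) J' (Finset.mem_coe.mp hJ') hne
  have sumB : ∀ h : X → ℝ, ∑ i ∈ B, h i = ∑ v ∈ V, ∑ i ∈ U v, h i := fun h =>
    Finset.sum_biUnion hdisjU
  have sumV : ∀ h : X → ℝ, ∑ v ∈ V, h v = ∑ J ∈ 𝒥', ∑ v ∈ J, h v := fun h =>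
    Finset.sum_biUnion hdisjJ
  -- nonnegativity facts
  have hxC0 : ∀ i ∈ B, 0 ≤ ∑ j ∈ C, x i j := fun i hi =>
    Finset.sum_nonneg fun j hj => hx i (hBF i hi) j hj
  have hdav0 : ∀ j ∈ C, 0 ≤ ∑ i' ∈ F, x i' j * dist i' j := fun j hj =>
    Finset.sum_nonneg fun i' hi' => mul_nonneg (hx i' hi' j hj) dist_nonneg
  have hD0 : ∀ i ∈ B, 0 ≤ ∑ j ∈ C, x i j * (dist i j + ∑ i' ∈ F, x i' j * dist i' j) :=
    fun i hi => Finset.sum_nonneg fun j hj => mul_nonneg (hx i (hBF i hi) j hj)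
      (add_nonneg dist_nonneg (hdav0 j hj))
  have hDB0 : 0 ≤ DB := Finset.sum_nonneg hD0
  have hDBsplit : DB = ∑ J ∈ 𝒥', ∑ v ∈ J, ∑ i ∈ U v, ∑ j ∈ C,
      x i j * (dist i j + ∑ i' ∈ F, x i' j * dist i' j) := by
    rw [hDB, sumB, sumV]
  -- the component chain inequality
  have chainJ : ∀ J ∈ 𝒥', L J * (∑ v ∈ J, ∑ i ∈ U v, ∑ j ∈ C, x i j) ≤
      10 * ℓ₂ * ∑ v ∈ J, ∑ i ∈ U v, ∑ j ∈ C,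
        x i j * (dist i j + ∑ i' ∈ F, x i' j * dist i' j) := by
    intro J hJ
    calc L J * (∑ v ∈ J, ∑ i ∈ U v, ∑ j ∈ C, x i j)
        ≤ L J * (ℓ₂ * ∑ j ∈ C, (∑ v ∈ J, ∑ i ∈ U v, x i j) *
            (1 - ∑ v ∈ J, ∑ i ∈ U v, x i j)) :=
          mul_le_mul_of_nonneg_left (H2 J hJ) (hL J hJ)
      _ = ℓ₂ * (L J * ∑ j ∈ C, (∑ v ∈ J, ∑ i ∈ U v, x i j) *
            (1 - ∑ v ∈ J, ∑ i ∈ U v, x i j)) := by ring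
      _ ≤ ℓ₂ * (10 * ∑ v ∈ J, ∑ i ∈ U v, ∑ j ∈ C,
            x i j * (dist i j + ∑ i' ∈ F, x i' j * dist i' j)) :=
          mul_le_mul_of_nonneg_left (H3 J hJ) hℓ₂
      _ = 10 * ℓ₂ * ∑ v ∈ J, ∑ i ∈ U v, ∑ j ∈ C,
            x i j * (dist i j + ∑ i' ∈ F, x i' j * dist i' j) := by ring
  -- F1
  have F1 : ∀ i ∈ B, (∑ j ∈ C, x i j) * dist i (w i) ≤
      4 * ∑ j ∈ C, x i j * (dist i j + ∑ i' ∈ F, x i' j * dist i' j) := by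
    intro i hiB
    have hwV := (hw i hiB).1
    have hwU := (hw i hiB).2
    rw [Finset.sum_mul, Finset.mul_sum]
    apply Finset.sum_le_sum
    intro j hj
    have h1 := H1 (Jf (w i)) (hJf (w i) hwV).1 (w i) (hJf (w i) hwV).2 i hwU j hj
    have hxij := hx i (hBF i hiB) j hj
    have hdij : (0:ℝ) ≤ dist i j := dist_nonneg
    nlinarith [mul_le_mul_of_nonneg_left h1 hxij, mul_nonneg hxij hdij]
  -- F2b
  have F2b : ∑ i ∈ B, (∑ j ∈ C, x i j) * L (Jf (w i)) ≤ 10 * ℓ₂ * DB := by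
    rw [sumB, sumV, hDBsplit, Finset.mul_sum]
    apply Finset.sum_le_sum
    intro J hJ
    have hLsub : ∑ v ∈ J, ∑ i ∈ U v, (∑ j ∈ C, x i j) * L (Jf (w i)) =
        L J * ∑ v ∈ J, ∑ i ∈ U v, ∑ j ∈ C, x i j := by
      rw [Finset.mul_sum]
      apply Finset.sum_congr rfl
      intro v hv
      rw [Finset.mul_sum]
      apply Finset.sum_congr rfl
      intro i hi
      have hvV : v ∈ V := hVJ hJ hv
      have hiB : i ∈ B := hBU hvV hi
      rw [wuniq hvV hi hiB, Juniq hJ hv hvV]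
      ring
    rw [hLsub]
    exact chainJ J hJ
  -- F2
  have F2 : ∑ i ∈ B, (∑ j ∈ C, x i j) * g i ≤ (4 + 10 * c * ℓ₂) * DB := by
    have hsplit : ∑ i ∈ B, (∑ j ∈ C, x i j) * g i =
        ∑ i ∈ B, (∑ j ∈ C, x i j) * dist i (w i) +
          c * ∑ i ∈ B, (∑ j ∈ C, x i j) * L (Jf (w i)) := by
      rw [Finset.mul_sum, ← Finset.sum_add_distrib]
      apply Finset.sum_congr rfl
      intro i hi
      rw [hgdef]
      ring
    have h1 : ∑ i ∈ B, (∑ j ∈ C, x i j) * dist i (w i) ≤ 4 * DB := by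
      rw [hDB, Finset.mul_sum]
      exact Finset.sum_le_sum F1
    have h2 : c * ∑ i ∈ B, (∑ j ∈ C, x i j) * L (Jf (w i)) ≤ c * (10 * ℓ₂ * DB) :=
      mul_le_mul_of_nonneg_left F2b hc
    rw [hsplit]
    nlinarith
  -- F3
  have F3 : ∑ v ∈ V, (∑ i ∈ U v, ∑ j ∈ C, x i j) * dist v vstar ≤ 10 * c * ℓ₂ * DB := by
    rw [sumV, hDBsplit, Finset.mul_sum]
    apply Finset.sum_le_sum
    intro J hJ
    have hα0 : ∀ v ∈ J, 0 ≤ ∑ i ∈ U v, ∑ j ∈ C, x i j := fun v hv =>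
      Finset.sum_nonneg fun i hi => hxC0 i (hBU (hVJ hJ hv) hi)
    calc ∑ v ∈ J, (∑ i ∈ U v, ∑ j ∈ C, x i j) * dist v vstar
        ≤ ∑ v ∈ J, (∑ i ∈ U v, ∑ j ∈ C, x i j) * (c * L J) :=
          Finset.sum_le_sum fun v hv =>
            mul_le_mul_of_nonneg_left (hvstar J hJ v hv) (hα0 v hv)
      _ = c * (L J * ∑ v ∈ J, ∑ i ∈ U v, ∑ j ∈ C, x i j) := by
          rw [← Finset.sum_mul]; ring
      _ ≤ c * (10 * ℓ₂ * ∑ v ∈ J, ∑ i ∈ U v, ∑ j ∈ C,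
            x i j * (dist i j + ∑ i' ∈ F, x i' j * dist i' j)) :=
          mul_le_mul_of_nonneg_left (chainJ J hJ) hc
      _ = 10 * c * ℓ₂ * ∑ v ∈ J, ∑ i ∈ U v, ∑ j ∈ C,
            x i j * (dist i j + ∑ i' ∈ F, x i' j * dist i' j) := by ring
  -- F4
  have F4 : ∀ i ∈ B, ∀ v : X, dist v i ≤ dist v vstar + g i := by
    intro i hi v
    have hwV := (hw i hi).1
    have h1 : dist (w i) vstar ≤ c * L (Jf (w i)) :=
      hvstar _ (hJf (w i) hwV).1 _ (hJf (w i) hwV).2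
    have h2 : dist v i ≤ dist v vstar + dist vstar i := dist_triangle v vstar i
    have h3 : dist vstar i ≤ dist vstar (w i) + dist (w i) i := dist_triangle vstar (w i) i
    have h4 : dist vstar (w i) = dist (w i) vstar := dist_comm _ _
    have h5 : dist (w i) i = dist i (w i) := dist_comm _ _
    rw [hgdef]
    simp only
    linarith
  -- apply lemA
  obtain ⟨β₀, hβ₀b, hβ₀s, hβ₀g, hβ₀u, hβ₀c⟩ :=
    lemA B u g ((B.filter fun i => 0 < (∑ j ∈ C, x i j) ∧ (∑ j ∈ C, x i j) < u i).card)
      (fun i => ∑ j ∈ C, x i j) le_rfl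
      (fun i hi => ⟨hxC0 i hi,
        le_trans (hu i hi).2 (mul_le_of_le_one_right (hu i hi).1 (hy i hi).2)⟩)
  -- counting
  set M : ℝ := ∑ i ∈ B, ∑ j ∈ C, x i j with hM
  have hM0 : 0 ≤ M := Finset.sum_nonneg hxC0
  have hMV : M = ∑ v ∈ V, ∑ i ∈ U v, ∑ j ∈ C, x i j := sumB _
  set Y : ℝ := ∑ i ∈ B, y i with hY
  have hY0 : 0 ≤ Y := Finset.sum_nonneg fun i hi => (hy i hi).1.le
  have hbudget : ∑ i ∈ B, β₀ i * (u i)⁻¹ ≤ Y := by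
    refine le_trans hβ₀u (Finset.sum_le_sum ?_)
    intro i hi
    by_cases hui : u i = 0
    · simp only [hui, inv_zero, mul_zero]
      exact (hy i hi).1.le
    · have hupos : 0 < u i := lt_of_le_of_ne (hu i hi).1 (Ne.symm hui)
      calc (∑ j ∈ C, x i j) * (u i)⁻¹ ≤ (u i * y i) * (u i)⁻¹ :=
            mul_le_mul_of_nonneg_right (hu i hi).2 (inv_nonneg.mpr (hu i hi).1)
        _ = y i := by field_simp
  set P : Finset X := B.filter (fun i => β₀ i ≠ 0) with hP
  have hPB : P ⊆ B := Finset.filter_subset _ _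
  have hβpos : ∀ i ∈ P, 0 < β₀ i := by
    intro i hi
    obtain ⟨hiB, hne⟩ := Finset.mem_filter.mp hi
    exact lt_of_le_of_ne (hβ₀b i hiB).1 (Ne.symm hne)
  set Pf : Finset X := P.filter (fun i => u i ≤ β₀ i) with hPf
  set Pr : Finset X := P.filter (fun i => β₀ i < u i) with hPr
  have hsplitP : Pf.card + Pr.card = P.card := by
    have hPr' : Pr = P.filter (fun i => ¬ (u i ≤ β₀ i)) := by
      rw [hPr]
      apply Finset.filter_congr
      intro i _
      simp [not_le]
    rw [hPf, hPr']
    exact Finset.card_filter_add_card_filter_not _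
  have hPr2 : Pr.card ≤ 2 := by
    refine le_trans (Finset.card_le_card ?_) hβ₀c
    intro i hi
    obtain ⟨hiP, hilt⟩ := Finset.mem_filter.mp hi
    exact Finset.mem_filter.mpr ⟨hPB hiP, hβpos i hiP, hilt⟩
  have hterm0 : ∀ i ∈ B, 0 ≤ β₀ i * (u i)⁻¹ := fun i hi =>
    mul_nonneg (hβ₀b i hi).1 (inv_nonneg.mpr (hu i hi).1)
  have hPfone : ∀ i ∈ Pf, β₀ i * (u i)⁻¹ = 1 := by
    intro i hi
    obtain ⟨hiP, hige⟩ := Finset.mem_filter.mp hi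
    have hiB := hPB hiP
    have heq : β₀ i = u i := le_antisymm (hβ₀b i hiB).2 hige
    have hupos : 0 < u i := heq ▸ hβpos i hiP
    rw [heq]
    field_simp
  have hPfB : Pf ⊆ B := fun i hi => hPB (Finset.mem_filter.mp hi).1
  have hPrB : Pr ⊆ B := fun i hi => hPB (Finset.mem_filter.mp hi).1
  have hdisjPfPr : Disjoint Pf Pr := by
    rw [Finset.disjoint_left]
    intro i hi1 hi2
    exact absurd (Finset.mem_filter.mp hi2).2 (not_lt.mpr (Finset.mem_filter.mp hi1).2)
  have hkey : (Pf.card : ℝ) + ∑ i ∈ Pr, β₀ i * (u i)⁻¹ ≤ Y := by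
    have h1 : ∑ i ∈ Pf, β₀ i * (u i)⁻¹ = (Pf.card : ℝ) := by
      rw [Finset.sum_congr rfl hPfone]
      simp
    have h2 : ∑ i ∈ Pf ∪ Pr, β₀ i * (u i)⁻¹ ≤ ∑ i ∈ B, β₀ i * (u i)⁻¹ := by
      apply Finset.sum_le_sum_of_subset_of_nonneg
      · exact Finset.union_subset hPfB hPrB
      · intro i hi _; exact hterm0 i hi
    rw [Finset.sum_union hdisjPfPr, h1] at h2
    linarith
  have hPcard : (P.card : ℤ) ≤ ⌈Y⌉ + 1 := by
    rcases Finset.eq_empty_or_nonempty Pr with hPre | hPrne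
    · have hkey2 := hkey
      rw [hPre, Finset.sum_empty, add_zero] at hkey2
      have hc2 : (Pf.card : ℤ) ≤ ⌈Y⌉ := by
        have := hkey2.trans (Int.le_ceil Y)
        exact_mod_cast this
      have hc3 : P.card = Pf.card := by
        rw [← hsplitP, hPre]
        simp
      rw [hc3]
      linarith
    · obtain ⟨i₀, hi₀⟩ := hPrne
      have hi₀P := (Finset.mem_filter.mp hi₀).1
      have hρpos : 0 < β₀ i₀ * (u i₀)⁻¹ := by
        have h1 := hβpos i₀ hi₀P
        have h2 : 0 < u i₀ := lt_trans h1 (Finset.mem_filter.mp hi₀).2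
        exact mul_pos h1 (inv_pos.mpr h2)
      have hsumPr : β₀ i₀ * (u i₀)⁻¹ ≤ ∑ i ∈ Pr, β₀ i * (u i)⁻¹ :=
        Finset.single_le_sum (fun i hi => hterm0 i (hPrB hi)) hi₀
      have hlt : (Pf.card : ℝ) < Y := by linarith
      have hfZ : (Pf.card : ℤ) < ⌈Y⌉ := Int.lt_ceil.mpr (by exact_mod_cast hlt)
      have hPQ : (P.card : ℤ) = (Pf.card : ℤ) + (Pr.card : ℤ) := by
        exact_mod_cast hsplitP.symm
      have hPr2' : (Pr.card : ℤ) ≤ 2 := by exact_mod_cast hPr2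
      linarith
  -- choose S
  have hYleB : (⌈Y⌉ : ℤ) ≤ (B.card : ℤ) := by
    have h1 : Y ≤ ((B.card : ℤ) : ℝ) := by
      rw [hY]
      push_cast
      calc ∑ i ∈ B, y i ≤ ∑ i ∈ B, (1:ℝ) := Finset.sum_le_sum fun i hi => (hy i hi).2
        _ = B.card := by simp
    exact Int.ceil_le.mpr h1
  have hceil0 : 0 ≤ ⌈Y⌉ := Int.ceil_nonneg hY0
  set kN : ℕ := (⌈Y⌉).toNat with hkN
  have hkNc : (kN : ℤ) = ⌈Y⌉ := Int.toNat_of_nonneg hceil0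
  have hkNB : kN ≤ B.card := by
    have : (kN : ℤ) ≤ (B.card : ℤ) := by rw [hkNc]; exact hYleB
    exact_mod_cast this
  have hPk : P.card ≤ kN + 1 := by
    have : (P.card : ℤ) ≤ (kN : ℤ) + 1 := by rw [hkNc]; exact hPcard
    exact_mod_cast this
  have hm2 : max kN P.card ≤ B.card := max_le hkNB (Finset.card_le_card hPB)
  obtain ⟨S, hPS, hSB, hScard⟩ :=
    Finset.exists_subsuperset_card_eq hPB (le_max_right kN P.card) hm2
  have hi1 : ⌈Y⌉ ≤ (S.card : ℤ) := by
    rw [hScard, ← hkNc]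
    exact_mod_cast le_max_left kN P.card
  have hi2 : (S.card : ℤ) ≤ ⌈Y⌉ + 1 := by
    rw [hScard, ← hkNc]
    have h1 : max kN P.card ≤ kN + 1 := max_le (by omega) hPk
    exact_mod_cast h1
  -- define β'
  set β' : X → ℝ := fun i => if i ∈ P then β₀ i else 0 with hβ'
  have hβ'B : ∀ i ∈ B, β' i = β₀ i := by
    intro i hi
    by_cases h : i ∈ P
    · simp [hβ', h]
    · have hz : β₀ i = 0 := by
        by_contra hne
        exact h (Finset.mem_filter.mpr ⟨hi, hne⟩)
      simp [hβ', h, hz]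
  have hβ'0 : ∀ i, 0 ≤ β' i := by
    intro i
    by_cases h : i ∈ P
    · simp only [hβ', if_pos h]; exact (hβ₀b i (hPB h)).1
    · simp [hβ', h]
  have hβ'sum : ∑ i ∈ B, β' i = M := by
    rw [Finset.sum_congr rfl hβ'B]; exact hβ₀s
  have hα0 : ∀ v ∈ V, 0 ≤ ∑ i ∈ U v, ∑ j ∈ C, x i j := fun v hv =>
    Finset.sum_nonneg fun i hi => hxC0 i (hBU hv hi)
  have hαM : ∀ v ∈ V, (∑ i ∈ U v, ∑ j ∈ C, x i j) ≤ M := by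
    intro v hv
    rw [hMV]
    exact Finset.single_le_sum (fun v' hv' => hα0 v' hv') hv
  -- define f
  set f : X → X → ℝ := fun v i =>
    if v ∈ V then (∑ i' ∈ U v, ∑ j ∈ C, x i' j) * β' i * M⁻¹ else 0 with hf
  have hf0 : ∀ v i, 0 ≤ f v i := by
    intro v i
    by_cases h : v ∈ V
    · simp only [hf, if_pos h]
      exact mul_nonneg (mul_nonneg (hα0 v h) (hβ'0 i)) (inv_nonneg.mpr hM0)
    · simp [hf, h]
  refine ⟨S, β', hSB, hβ'0, ⟨hi1, hi2⟩, ?_, ?_, ?_, f, hf0, ?_, ?_, ?_⟩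
  · -- (ii) a
    intro i hiS
    by_cases h : i ∈ P
    · simp only [hβ', if_pos h]; exact (hβ₀b i (hPB h)).2
    · simp only [hβ', if_neg h]; exact (hu i (hSB hiS)).1
  · -- (ii) b
    intro i hiB hiS
    have h : i ∉ P := fun h => hiS (hPS h)
    simp [hβ', h]
  · -- (iii)
    rw [hβ'sum, hMV]
  · -- (iv) row marginals
    intro v hv
    simp only [hf, if_pos hv]
    have hrw : ∑ i ∈ B, (∑ i' ∈ U v, ∑ j ∈ C, x i' j) * β' i * M⁻¹
        = (∑ i' ∈ U v, ∑ j ∈ C, x i' j) * M⁻¹ * ∑ i ∈ B, β' i := by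
      rw [Finset.mul_sum]
      exact Finset.sum_congr rfl fun i _ => by ring
    rw [hrw, hβ'sum]
    rcases eq_or_lt_of_le hM0 with hMz | hMp
    · have hαz : (∑ i' ∈ U v, ∑ j ∈ C, x i' j) = 0 :=
        le_antisymm ((hαM v hv).trans hMz.symm.le) (hα0 v hv)
      rw [hαz]
      simp
    · rw [mul_assoc, inv_mul_cancel₀ (ne_of_gt hMp), mul_one]
  · -- (iv) column marginals
    intro i hiB
    have hcongr : ∑ v ∈ V, f v i = (∑ v ∈ V, ∑ i' ∈ U v, ∑ j ∈ C, x i' j) * β' i * M⁻¹ := by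
      rw [Finset.sum_mul, Finset.sum_mul]
      exact Finset.sum_congr rfl fun v hv => by simp only [hf, if_pos hv]
    rw [hcongr, ← hMV]
    rcases eq_or_lt_of_le hM0 with hMz | hMp
    · rw [← hMz]
      simpa using hβ'0 i
    · rw [mul_comm M (β' i), mul_assoc, mul_inv_cancel₀ (ne_of_gt hMp), mul_one]
  · -- (iv) cost
    rcases eq_or_lt_of_le hM0 with hMz | hMp
    · have hfz : ∀ v ∈ V, ∀ i ∈ B, f v i = 0 := by
        intro v hv i hi
        simp only [hf, if_pos hv, ← hMz, inv_zero, mul_zero]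
      have hz : ∑ v ∈ V, ∑ i ∈ B, f v i * dist v i = 0 := by
        apply Finset.sum_eq_zero
        intro v hv
        apply Finset.sum_eq_zero
        intro i hi
        rw [hfz v hv i hi, zero_mul]
      rw [hz]
      have : (0:ℝ) ≤ 4 + 20 * c * ℓ₂ := by positivity
      exact mul_nonneg this hDB0
    · have step1 : ∑ v ∈ V, ∑ i ∈ B, f v i * dist v i ≤
          ∑ v ∈ V, ∑ i ∈ B, f v i * (dist v vstar + g i) := by
        apply Finset.sum_le_sum
        intro v hv
        apply Finset.sum_le_sum
        intro i hi
        exact mul_le_mul_of_nonneg_left (F4 i hi v) (hf0 v i)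
      have expand : ∀ v ∈ V, ∑ i ∈ B, f v i * (dist v vstar + g i) =
          (∑ i' ∈ U v, ∑ j ∈ C, x i' j) * dist v vstar * (M⁻¹ * ∑ i ∈ B, β' i)
          + (∑ i' ∈ U v, ∑ j ∈ C, x i' j) * (M⁻¹ * ∑ i ∈ B, β' i * g i) := by
        intro v hv
        simp only [hf, if_pos hv]
        rw [Finset.mul_sum, Finset.mul_sum, Finset.mul_sum, Finset.mul_sum,
          ← Finset.sum_add_distrib]
        apply Finset.sum_congr rfl
        intro i hi
        ring
      have sumexpand : ∑ v ∈ V, ∑ i ∈ B, f v i * (dist v vstar + g i) =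
          (∑ v ∈ V, (∑ i' ∈ U v, ∑ j ∈ C, x i' j) * dist v vstar) * (M⁻¹ * ∑ i ∈ B, β' i)
          + (∑ v ∈ V, ∑ i' ∈ U v, ∑ j ∈ C, x i' j) * (M⁻¹ * ∑ i ∈ B, β' i * g i) := by
        rw [Finset.sum_congr rfl expand, Finset.sum_add_distrib, Finset.sum_mul,
          Finset.sum_mul]
      rw [hβ'sum, inv_mul_cancel₀ (ne_of_gt hMp), mul_one, ← hMV] at sumexpand
      have hMM : M * (M⁻¹ * ∑ i ∈ B, β' i * g i) = ∑ i ∈ B, β' i * g i := by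
        rw [← mul_assoc, mul_inv_cancel₀ (ne_of_gt hMp), one_mul]
      rw [hMM] at sumexpand
      have hβg : ∑ i ∈ B, β' i * g i ≤ (4 + 10 * c * ℓ₂) * DB := by
        have heq : ∑ i ∈ B, β' i * g i = ∑ i ∈ B, β₀ i * g i :=
          Finset.sum_congr rfl fun i hi => by rw [hβ'B i hi]
        rw [heq]
        exact le_trans hβ₀g F2
      calc ∑ v ∈ V, ∑ i ∈ B, f v i * dist v i
          ≤ ∑ v ∈ V, ∑ i ∈ B, f v i * (dist v vstar + g i) := step1
        _ = (∑ v ∈ V, (∑ i' ∈ U v, ∑ j ∈ C, x i' j) * dist v vstar)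
            + ∑ i ∈ B, β' i * g i := sumexpand
        _ ≤ 10 * c * ℓ₂ * DB + (4 + 10 * c * ℓ₂) * DB := add_le_add F3 hβg
        _ = (4 + 20 * c * ℓ₂) * DB := by ring
end

section
/- Let Ω be a finite set with weights ζ : Ω → ℝ satisfying ζ(ω) ≥ 0 and Σ_ω ζ(ω) = 1; let Z : Ω → ℝ satisfy 0 ≤ Z(ω) ≤ 1 for all ω; let x ∈ [0,1] and let ℓ ≥ 3/2 be real, and assume Σ_ω ζ(ω)·(1 − Z(ω)) ≤ 2ℓ·(1 − x). Then Σ_ω ζ(ω)·max(x − Z(ω), 0) ≤ 3ℓ·x·(1 − x). -/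
/-- The key estimate in the proof of Lemma 4.5:
`E[max{x − Z, 0}] ≤ min{x, 2ℓ(1−x)} ≤ 3ℓ·x·(1−x)`. -/
theorem stmt_12 {Ω : Type*} [Fintype Ω]
    (ζ : Ω → ℝ) (hζ : ∀ ω, 0 ≤ ζ ω) (hζ1 : ∑ ω, ζ ω = 1)
    (Z : Ω → ℝ) (hZ : ∀ ω, 0 ≤ Z ω ∧ Z ω ≤ 1)
    (x : ℝ) (hx0 : 0 ≤ x) (hx1 : x ≤ 1) (ℓ : ℝ) (hℓ : 3 / 2 ≤ ℓ)
    (h : ∑ ω, ζ ω * (1 - Z ω) ≤ 2 * ℓ * (1 - x)) :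
    ∑ ω, ζ ω * max (x - Z ω) 0 ≤ 3 * ℓ * x * (1 - x) := by
  have hbx : ∑ ω, ζ ω * max (x - Z ω) 0 ≤ x := by
    calc ∑ ω, ζ ω * max (x - Z ω) 0 ≤ ∑ ω, ζ ω * x := by
          apply Finset.sum_le_sum
          intro ω _
          exact mul_le_mul_of_nonneg_left
            (max_le (by linarith [(hZ ω).1]) hx0) (hζ ω)
      _ = x := by rw [← Finset.sum_mul, hζ1, one_mul]
  have hbz : ∑ ω, ζ ω * max (x - Z ω) 0 ≤ 2 * ℓ * (1 - x) := by
    calc ∑ ω, ζ ω * max (x - Z ω) 0 ≤ ∑ ω, ζ ω * (1 - Z ω) := by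
          apply Finset.sum_le_sum
          intro ω _
          exact mul_le_mul_of_nonneg_left
            (max_le (by linarith [(hZ ω).2]) (by linarith [(hZ ω).2])) (hζ ω)
      _ ≤ 2 * ℓ * (1 - x) := h
  rcases le_or_gt ((2:ℝ)/3) x with hc | hc
  · calc ∑ ω, ζ ω * max (x - Z ω) 0 ≤ 2 * ℓ * (1 - x) := hbz
      _ ≤ 3 * ℓ * x * (1 - x) := by
          nlinarith [mul_nonneg (mul_nonneg (show (0:ℝ) ≤ ℓ by linarith)
            (show (0:ℝ) ≤ 1 - x by linarith)) (show (0:ℝ) ≤ 3*x - 2 by linarith)]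
  · calc ∑ ω, ζ ω * max (x - Z ω) 0 ≤ x := hbx
      _ ≤ 3 * ℓ * x * (1 - x) := by
          nlinarith [mul_nonneg hx0 (show (0:ℝ) ≤ 3*ℓ*(1-x) - 1 by nlinarith)]
end

section
/- Let u ≥ 2 be an integer and D > 0 a real number. Consider the point set P := Fin u × Fin (2u+1), with dist((g,a),(g',a')) := 0 if g = g' and D otherwise; let the facilities be F := {(g,a) ∈ P : (a:ℕ) < 2} (two per group g) and the clients be C := {(g,a) ∈ P : (a:ℕ) ≥ 2} (2u−1 per group), and give every facility capacity u. Then: (a) for every S ⊆ F with |S| ≤ 2u−1 and every σ : C → F with σ(j) ∈ S for all j ∈ C and |{j ∈ C : σ(j) = i}| ≤ 2u−2 for every i ∈ S, one has Σ_{j∈C} dist(j, σ(j)) ≥ D; (b) there exist x : F × C → ℝ and y : F → ℝ with 0 ≤ x_{i,j} ≤ y_i ≤ 1, Σ_{i∈F} y_i ≤ 2u−1, Σ_{i∈F} x_{i,j} = 1 for every j ∈ C, Σ_{j∈C} x_{i,j} ≤ u·y_i for every i ∈ F, and Σ_{i∈F, j∈C} x_{i,j}·dist(i,j) = 0. -/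
lemma fin_lt2 (n : ℕ) (h : 2 ≤ n) :
    (Finset.univ.filter (fun a : Fin n => (a:ℕ) < 2)).card = 2 := by
  have h0 : 0 < n := by omega
  have h1 : 1 < n := by omega
  have : (Finset.univ.filter (fun a : Fin n => (a:ℕ) < 2)) = {⟨0, h0⟩, ⟨1, h1⟩} := by
    ext a
    simp only [Finset.mem_filter, Finset.mem_univ, true_and, Finset.mem_insert,
      Finset.mem_singleton, Fin.ext_iff]
    omega
  rw [this]
  simp [Fin.ext_iff]

lemma fin_ge2 (n : ℕ) (h : 2 ≤ n) :
    (Finset.univ.filter (fun a : Fin n => 2 ≤ (a:ℕ))).card = n - 2 := by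
  have := Finset.card_filter_add_card_filter_not
    (s := (Finset.univ : Finset (Fin n))) (p := fun a => (a:ℕ) < 2)
  simp only [not_lt, Finset.card_univ, Fintype.card_fin] at this
  have h2 := fin_lt2 n h
  omega

lemma fiber_card {u m : ℕ} (g : Fin u) (p : Fin m → Prop) [DecidablePred p] :
    ((Finset.univ.filter (fun q : Fin u × Fin m => p q.2)).filter
      (fun q => q.1 = g)).card = (Finset.univ.filter p).card := by
  apply Finset.card_bij (fun q _ => q.2)
  · intro q hq
    simp only [Finset.mem_filter, Finset.mem_univ, true_and] at hq ⊢
    exact hq.1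
  · intro a ha b hb hab
    simp only [Finset.mem_filter, Finset.mem_univ, true_and] at ha hb
    exact Prod.ext (ha.2.trans hb.2.symm) hab
  · intro a ha
    simp only [Finset.mem_filter, Finset.mem_univ, true_and] at ha
    exact ⟨(g, a), by simp [ha], rfl⟩

/-- The integrality gap instance for the basic LP relaxation of capacitated
k-median (Section 2): `u` isolated groups, each with 2 facilities of capacity
`u` and `2u−1` collocated clients, `k = 2u−1`. Every integral solution with
capacity violation `2−2/u` pays at least `D`, while the LP has cost 0. -/
theorem stmt_14 (u : ℕ) (hu : 2 ≤ u) (D : ℝ) (hD : 0 < D) :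
    let P := Fin u × Fin (2 * u + 1)
    let dst : P → P → ℝ := fun p q => if p.1 = q.1 then 0 else D
    let Fs : Finset P := Finset.univ.filter (fun p => (p.2 : ℕ) < 2)
    let Cs : Finset P := Finset.univ.filter (fun p => 2 ≤ (p.2 : ℕ))
    -- (a): every pseudo-integral solution pays at least D
    ((∀ S ⊆ Fs, S.card ≤ 2 * u - 1 → ∀ σ : P → P, (∀ j ∈ Cs, σ j ∈ S) →
        (∀ i ∈ S, (Cs.filter (fun j => σ j = i)).card ≤ 2 * u - 2) →
        D ≤ ∑ j ∈ Cs, dst j (σ j)) ∧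
    -- (b): the basic LP has a feasible fractional solution of cost 0
      ∃ (x : P → P → ℝ) (y : P → ℝ),
        (∀ i ∈ Fs, ∀ j ∈ Cs, 0 ≤ x i j ∧ x i j ≤ y i) ∧
        (∀ i ∈ Fs, y i ≤ 1) ∧
        (∑ i ∈ Fs, y i ≤ 2 * (u : ℝ) - 1) ∧
        (∀ j ∈ Cs, ∑ i ∈ Fs, x i j = 1) ∧
        (∀ i ∈ Fs, ∑ j ∈ Cs, x i j ≤ (u : ℝ) * y i) ∧
        (∑ i ∈ Fs, ∑ j ∈ Cs, x i j * dst i j = 0)) := by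
  intro P dst Fs Cs
  have hm : 2 ≤ 2 * u + 1 := by omega
  -- fiber cardinalities
  have hCg : ∀ g : Fin u, (Cs.filter (fun j => j.1 = g)).card = 2 * u - 1 := by
    intro g
    have := fiber_card (m := 2 * u + 1) g (fun a => 2 ≤ (a : ℕ))
    rw [this, fin_ge2 _ hm]
    omega
  have hFg : ∀ g : Fin u, (Fs.filter (fun i => i.1 = g)).card = 2 := by
    intro g
    have := fiber_card (m := 2 * u + 1) g (fun a => (a : ℕ) < 2)
    rw [this, fin_lt2 _ hm]
  constructor
  · -- part (a)
    intro S hS hcard σ hσS hcap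
    -- find a group with at most one open facility
    have hgroup : ∃ g : Fin u, (S.filter (fun i => i.1 = g)).card ≤ 1 := by
      by_contra h
      push_neg at h
      have hsum : S.card = ∑ g : Fin u, (S.filter (fun i => i.1 = g)).card :=
        Finset.card_eq_sum_card_fiberwise (fun i _ => Finset.mem_univ i.1)
      have : 2 * u ≤ S.card := by
        rw [hsum]
        calc 2 * u = ∑ _g : Fin u, 2 := by
              simp [Finset.sum_const, Finset.card_univ, mul_comm]
          _ ≤ ∑ g : Fin u, (S.filter (fun i => i.1 = g)).card :=
              Finset.sum_le_sum (fun g _ => h g)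
      omega
    obtain ⟨g, hg⟩ := hgroup
    -- some client of group g must be served outside the group
    have hbad : ∃ j ∈ Cs, j.1 = g ∧ (σ j).1 ≠ g := by
      by_contra h
      push_neg at h
      have hsub : Cs.filter (fun j => j.1 = g) ⊆
          (S.filter (fun i => i.1 = g)).biUnion
            (fun i => Cs.filter (fun j => σ j = i)) := by
        intro j hj
        rw [Finset.mem_filter] at hj
        obtain ⟨hjC, hjg⟩ := hj
        rw [Finset.mem_biUnion]
        refine ⟨σ j, ?_, ?_⟩
        · rw [Finset.mem_filter]
          exact ⟨hσS j hjC, h j hjC hjg⟩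
        · rw [Finset.mem_filter]
          exact ⟨hjC, rfl⟩
      have hle := Finset.card_le_card hsub
      have hb := Finset.card_biUnion_le
        (s := S.filter (fun i => i.1 = g)) (t := fun i => Cs.filter (fun j => σ j = i))
      have hb2 : ∑ i ∈ S.filter (fun i => i.1 = g),
          (Cs.filter (fun j => σ j = i)).card ≤
          ∑ _i ∈ S.filter (fun i => i.1 = g), (2 * u - 2) :=
        Finset.sum_le_sum (fun i hi => hcap i (Finset.mem_filter.mp hi).1)
      rw [Finset.sum_const, smul_eq_mul] at hb2
      have hcg := hCg g
      have : (S.filter (fun i => i.1 = g)).card * (2 * u - 2) ≤ 1 * (2 * u - 2) :=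
        Nat.mul_le_mul_right _ hg
      omega
    obtain ⟨j, hjC, hjg, hσj⟩ := hbad
    have hdstj : dst j (σ j) = D := by
      simp only [dst]
      rw [if_neg]
      rw [hjg]
      exact fun h => hσj h.symm
    calc D = dst j (σ j) := hdstj.symm
      _ ≤ ∑ j ∈ Cs, dst j (σ j) := by
          apply Finset.single_le_sum (f := fun j => dst j (σ j)) _ hjC
          intro k _
          simp only [dst]
          split
          · exact le_refl 0
          · exact hD.le
  · -- part (b)
    have hu0 : (0:ℝ) < (u:ℝ) := by positivity
    have h2u : (2 * (u:ℝ)) ≠ 0 := by positivity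
    refine ⟨fun i j => if i.1 = j.1 then (1:ℝ)/2 else 0,
      fun _ => 1 - 1/(2 * (u:ℝ)), ?_, ?_, ?_, ?_, ?_, ?_⟩
    · intro i _ j _
      have hu1 : (2:ℝ) ≤ (u:ℝ) := by exact_mod_cast hu
      constructor
      · dsimp only
        split <;> norm_num
      · have h1 : 1/(2 * (u:ℝ)) ≤ 1/2 := by
          rw [div_le_div_iff₀ (by positivity) (by norm_num)]
          nlinarith
        have h2 : (0:ℝ) < 1/(2*(u:ℝ)) := by positivity
        dsimp only
        split
        · linarith
        · linarith
    · intro i _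
      have : (0:ℝ) < 1/(2*(u:ℝ)) := by positivity
      linarith
    · -- sum of y
      have hFcard : Fs.card = 2 * u := by
        have hsum : Fs.card = ∑ g : Fin u, (Fs.filter (fun i => i.1 = g)).card :=
          Finset.card_eq_sum_card_fiberwise (fun i _ => Finset.mem_univ i.1)
        rw [hsum]
        simp [hFg, Finset.sum_const, Finset.card_univ, mul_comm]
      rw [Finset.sum_const, hFcard, nsmul_eq_mul]
      push_cast
      apply le_of_eq
      field_simp
      all_goals ring
    · -- each client fully served
      intro j _
      rw [← Finset.sum_filter, Finset.sum_const, hFg j.1, nsmul_eq_mul]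
      norm_num
    · -- capacity
      intro i _
      have hflip : Cs.filter (fun j => i.1 = j.1) = Cs.filter (fun j => j.1 = i.1) := by
        apply Finset.filter_congr
        intro j _
        simp [eq_comm]
      rw [← Finset.sum_filter, Finset.sum_const, hflip, hCg i.1, nsmul_eq_mul]
      have hc : ((2 * u - 1 : ℕ) : ℝ) = 2 * (u:ℝ) - 1 := by
        have : 1 ≤ 2 * u := by omega
        push_cast [Nat.cast_sub this]
        ring
      rw [hc]
      apply le_of_eq
      field_simp
      all_goals ring
    · -- zero cost
      apply Finset.sum_eq_zero
      intro i _
      apply Finset.sum_eq_zero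
      intro j _
      simp only [dst]
      by_cases h : i.1 = j.1 <;> simp [h]
end
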